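/- arXiv:2411.06502 — 8 statements merged into one kernel-verified Lean document; each statement's English description precedes it below -/
import Mathlib

section
/- For any two integer sequences and similarity defined via a nonnegative matching-weight function, the string similarity sim(A,B) = max over all pairs of strictly increasing index sequences i_1<...<i_k in [1,n], j_1<...<j_k in [1,m] of the sum of η(a_{i_t}, b_{j_t}), satisfies sim(A,B) = Σ_i δ(a_i,ε) + Σ_j δ(ε,b_j) - ed(A,B), where ed is the weighted edit distance with costs δ and η(a,b) := δ(a,ε)+δ(ε,b)-δ(a,b). -/
/-!
Charging `δdel a` for every symbol of `A` and `δins b` for every symbol of `B`, an alignment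
that substitutes a pair `(a, b)` saves exactly `η a b = δdel a + δins b - δ a b`, so cheapest
alignments correspond to heaviest matchings. Both inequalities follow the recurrence for `ed`:
the first pair of a matching either matches the two heads or avoids one of them, which bounds
its weight by `Σ δdel + Σ δins - ed`; conversely, following the branch of the minimum that `ed`
takes builds a matching of that weight.
-/

namespace Stmt0

def ed (δ : ℤ → ℤ → ℤ) (δdel δins : ℤ → ℤ) : List ℤ → List ℤ → ℤ
  | [], [] => 0
  | a :: A, [] => δdel a + ed δ δdel δins A []
  | [], b :: B => δins b + ed δ δdel δins [] B
  | a :: A, b :: B =>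
      min (δ a b + ed δ δdel δins A B)
        (min (δdel a + ed δ δdel δins A (b :: B))
             (δins b + ed δ δdel δins (a :: A) B))
termination_by A B => A.length + B.length

def MatchOK (A B : List ℤ) (M : List (ℕ × ℕ)) : Prop :=
  M.Chain' (fun p q => p.1 < q.1 ∧ p.2 < q.2) ∧
  ∀ p ∈ M, p.1 < A.length ∧ p.2 < B.length

def matchWt (η : ℤ → ℤ → ℤ) (A B : List ℤ) (M : List (ℕ × ℕ)) : ℤ :=
  (M.map (fun p => η (A.getD p.1 0) (B.getD p.2 0))).sum

def simSet (η : ℤ → ℤ → ℤ) (A B : List ℤ) : Set ℤ :=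
  {s | ∃ M, MatchOK A B M ∧ s = matchWt η A B M}

section EditDistance

variable (δ : ℤ → ℤ → ℤ) (δdel δins : ℤ → ℤ)

theorem ed_nil_left (B : List ℤ) : ed δ δdel δins [] B = (B.map δins).sum := by
  induction B with
  | nil => simp [ed]
  | cons b B ih => simp [ed, ih]

theorem ed_nil_right (A : List ℤ) : ed δ δdel δins A [] = (A.map δdel).sum := by
  induction A with
  | nil => simp [ed]
  | cons a A ih => simp [ed, ih]

theorem ed_cons_cons (a b : ℤ) (A B : List ℤ) :
    ed δ δdel δins (a :: A) (b :: B) =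
      min (δ a b + ed δ δdel δins A B)
        (min (δdel a + ed δ δdel δins A (b :: B)) (δins b + ed δ δdel δins (a :: A) B)) := by
  rw [ed]

theorem ed_cons_cons_eq_or (a b : ℤ) (A B : List ℤ) :
    ed δ δdel δins (a :: A) (b :: B) = δ a b + ed δ δdel δins A B ∨
      ed δ δdel δins (a :: A) (b :: B) = δdel a + ed δ δdel δins A (b :: B) ∨
      ed δ δdel δins (a :: A) (b :: B) = δins b + ed δ δdel δins (a :: A) B := by
  rw [ed_cons_cons]
  rcases min_choice (δ a b + ed δ δdel δins A B)
      (min (δdel a + ed δ δdel δins A (b :: B)) (δins b + ed δ δdel δins (a :: A) B)) with h | h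
  · exact .inl h
  · rw [h]
    exact .inr (min_choice _ _)

theorem ed_cons_left_le (a : ℤ) (A B : List ℤ) :
    ed δ δdel δins (a :: A) B ≤ δdel a + ed δ δdel δins A B := by
  cases B with
  | nil => simp [ed]
  | cons b B => rw [ed_cons_cons]; exact (min_le_right _ _).trans (min_le_left _ _)

theorem ed_cons_right_le (b : ℤ) (A B : List ℤ) :
    ed δ δdel δins A (b :: B) ≤ δins b + ed δ δdel δins A B := by
  cases A with
  | nil => simp [ed]
  | cons a A => rw [ed_cons_cons]; exact (min_le_right _ _).trans (min_le_right _ _)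

theorem ed_le_sum (A B : List ℤ) :
    ed δ δdel δins A B ≤ (A.map δdel).sum + (B.map δins).sum := by
  induction A with
  | nil => simp [ed_nil_left]
  | cons a A ih =>
    have := ed_cons_left_le δ δdel δins a A B
    simp only [List.map_cons, List.sum_cons]
    linarith

end EditDistance

section Matching

def shift (k l : ℕ) (M : List (ℕ × ℕ)) : List (ℕ × ℕ) :=
  M.map fun p => (p.1 + k, p.2 + l)

variable {A B : List ℤ} {M : List (ℕ × ℕ)}

theorem matchOK_iff_pairwise :
    MatchOK A B M ↔ M.Pairwise (fun p q => p.1 < q.1 ∧ p.2 < q.2) ∧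
      ∀ p ∈ M, p.1 < A.length ∧ p.2 < B.length := by
  have : IsTrans (ℕ × ℕ) (fun p q => p.1 < q.1 ∧ p.2 < q.2) :=
    ⟨fun _ _ _ h₁ h₂ => ⟨h₁.1.trans h₂.1, h₁.2.trans h₂.2⟩⟩
  rw [MatchOK, List.Chain', List.isChain_iff_pairwise]

theorem matchOK_nil : MatchOK A B [] :=
  ⟨List.isChain_nil, by simp⟩

theorem MatchOK.eq_nil_of_nil_left (h : MatchOK [] B M) : M = [] :=
  List.eq_nil_iff_forall_not_mem.2 fun p hp => by simpa using (h.2 p hp).1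

theorem MatchOK.eq_nil_of_nil_right (h : MatchOK A [] M) : M = [] :=
  List.eq_nil_iff_forall_not_mem.2 fun p hp => by simpa using (h.2 p hp).2

theorem eq_shift_of_le (k l : ℕ) (h : ∀ p ∈ M, k ≤ p.1 ∧ l ≤ p.2) :
    ∃ N, M = shift k l N := by
  refine ⟨M.map fun p => (p.1 - k, p.2 - l), ?_⟩
  rw [shift, List.map_map]
  conv_lhs => rw [← List.map_id M]
  refine List.map_congr_left fun p hp => ?_
  have := h p hp
  ext <;> simp <;> omega

theorem matchOK_shift_iff (A₀ B₀ : List ℤ) :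
    MatchOK (A₀ ++ A) (B₀ ++ B) (shift A₀.length B₀.length M) ↔ MatchOK A B M := by
  simp only [matchOK_iff_pairwise, shift, List.pairwise_map, List.forall_mem_map,
    List.length_append, add_lt_add_iff_right]
  exact and_congr_right' (forall₂_congr fun p _ => by omega)

theorem matchWt_shift (η : ℤ → ℤ → ℤ) (A₀ B₀ : List ℤ) :
    matchWt η (A₀ ++ A) (B₀ ++ B) (shift A₀.length B₀.length M) = matchWt η A B M := by
  simp only [matchWt, shift, List.map_map]
  congr 1
  refine List.map_congr_left fun p _ => ?_
  simp only [Function.comp_apply]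
  rw [List.getD_append_right _ _ _ _ (by omega), List.getD_append_right _ _ _ _ (by omega)]
  simp

theorem matchOK_cons_zero_shift_iff (a b : ℤ) {N : List (ℕ × ℕ)} :
    MatchOK (a :: A) (b :: B) ((0, 0) :: shift 1 1 N) ↔ MatchOK A B N := by
  rw [← matchOK_shift_iff (A := A) (B := B) (M := N) [a] [b]]
  simp only [matchOK_iff_pairwise, List.pairwise_cons, List.forall_mem_cons, shift,
    List.forall_mem_map, List.singleton_append, List.length_cons, List.length_nil, zero_add,
    Nat.succ_pos, and_self, implies_true, true_and]

theorem matchWt_cons_zero_shift (η : ℤ → ℤ → ℤ) (a b : ℤ) (N : List (ℕ × ℕ)) :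
    matchWt η (a :: A) (b :: B) ((0, 0) :: shift 1 1 N) = η a b + matchWt η A B N := by
  rw [matchWt, List.map_cons, List.sum_cons, ← matchWt]
  exact congrArg _ (matchWt_shift η [a] [b])

variable (η : ℤ → ℤ → ℤ) {a b : ℤ}

theorem MatchOK.exists_of_fst_pos (h : MatchOK (a :: A) B M) (hM : ∀ p ∈ M, 0 < p.1) :
    ∃ N, MatchOK A B N ∧ matchWt η (a :: A) B M = matchWt η A B N := by
  obtain ⟨N, rfl⟩ := eq_shift_of_le 1 0 fun p hp => ⟨hM p hp, Nat.zero_le _⟩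
  exact ⟨N, (matchOK_shift_iff (A := A) (B := B) [a] []).1 h, matchWt_shift η [a] []⟩

theorem MatchOK.exists_of_snd_pos (h : MatchOK A (b :: B) M) (hM : ∀ p ∈ M, 0 < p.2) :
    ∃ N, MatchOK A B N ∧ matchWt η A (b :: B) M = matchWt η A B N := by
  obtain ⟨N, rfl⟩ := eq_shift_of_le 0 1 fun p hp => ⟨Nat.zero_le _, hM p hp⟩
  exact ⟨N, (matchOK_shift_iff (A := A) (B := B) [] [b]).1 h, matchWt_shift η [] [b]⟩

theorem MatchOK.exists_of_head_zero (h : MatchOK (a :: A) (b :: B) ((0, 0) :: M)) :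
    ∃ N, MatchOK A B N ∧ matchWt η (a :: A) (b :: B) ((0, 0) :: M) = η a b + matchWt η A B N := by
  have hpos := (List.pairwise_cons.1 (matchOK_iff_pairwise.1 h).1).1
  obtain ⟨N, rfl⟩ := eq_shift_of_le 1 1 hpos
  exact ⟨N, (matchOK_cons_zero_shift_iff a b).1 h, matchWt_cons_zero_shift η a b N⟩

end Matching

section Similarity

variable (δ : ℤ → ℤ → ℤ) (δdel δins : ℤ → ℤ)

theorem matchWt_le_sum_sub_ed : ∀ (A B : List ℤ) (M : List (ℕ × ℕ)), MatchOK A B M →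
    matchWt (fun a b => δdel a + δins b - δ a b) A B M ≤
      (A.map δdel).sum + (B.map δins).sum - ed δ δdel δins A B
  | A, B, [], _ => by simpa [matchWt] using ed_le_sum δ δdel δins A B
  | [], _, _ :: _, h => absurd h.eq_nil_of_nil_left (List.cons_ne_nil _ _)
  | _ :: _, [], _ :: _, h => absurd h.eq_nil_of_nil_right (List.cons_ne_nil _ _)
  | a :: A, b :: B, (i, j) :: M, h => by
    have hlt := (List.pairwise_cons.1 (matchOK_iff_pairwise.1 h).1).1
    by_cases hi : 0 < i
    · obtain ⟨N, hN, hw⟩ := h.exists_of_fst_pos (fun a b => δdel a + δins b - δ a b) <|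
        List.forall_mem_cons.2 ⟨hi, fun p hp => hi.trans (hlt p hp).1⟩
      have ih := matchWt_le_sum_sub_ed A (b :: B) N hN
      have hed := ed_cons_left_le δ δdel δins a A (b :: B)
      simp only [List.map_cons, List.sum_cons] at ih ⊢
      linarith
    by_cases hj : 0 < j
    · obtain ⟨N, hN, hw⟩ := h.exists_of_snd_pos (fun a b => δdel a + δins b - δ a b) <|
        List.forall_mem_cons.2 ⟨hj, fun p hp => hj.trans (hlt p hp).2⟩
      have ih := matchWt_le_sum_sub_ed (a :: A) B N hN
      have hed := ed_cons_right_le δ δdel δins b (a :: A) B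
      simp only [List.map_cons, List.sum_cons] at ih ⊢
      linarith
    obtain rfl : i = 0 := by omega
    obtain rfl : j = 0 := by omega
    obtain ⟨N, hN, hw⟩ := h.exists_of_head_zero (fun a b => δdel a + δins b - δ a b)
    have ih := matchWt_le_sum_sub_ed A B N hN
    have hed : ed δ δdel δins (a :: A) (b :: B) ≤ δ a b + ed δ δdel δins A B := by
      rw [ed_cons_cons]; exact min_le_left _ _
    simp only [List.map_cons, List.sum_cons]
    linarith
termination_by A B => A.length + B.length

theorem exists_matchOK_matchWt_eq : ∀ A B : List ℤ, ∃ M, MatchOK A B M ∧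
    matchWt (fun a b => δdel a + δins b - δ a b) A B M =
      (A.map δdel).sum + (B.map δins).sum - ed δ δdel δins A B
  | [], B => ⟨[], matchOK_nil, by simp [matchWt, ed_nil_left]⟩
  | A, [] => ⟨[], matchOK_nil, by simp [matchWt, ed_nil_right]⟩
  | a :: A, b :: B => by
    simp only [List.map_cons, List.sum_cons]
    rcases ed_cons_cons_eq_or δ δdel δins a b A B with hed | hed | hed
    · obtain ⟨N, hN, hw⟩ := exists_matchOK_matchWt_eq A B
      refine ⟨(0, 0) :: shift 1 1 N, (matchOK_cons_zero_shift_iff a b).2 hN, ?_⟩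
      rw [matchWt_cons_zero_shift, hw, hed]
      ring
    · obtain ⟨N, hN, hw⟩ := exists_matchOK_matchWt_eq A (b :: B)
      refine ⟨shift 1 0 N, (matchOK_shift_iff (A := A) (B := b :: B) [a] []).2 hN, ?_⟩
      rw [show matchWt _ (a :: A) (b :: B) (shift 1 0 N) = _ from matchWt_shift _ [a] [], hw, hed]
      simp only [List.map_cons, List.sum_cons]
      ring
    · obtain ⟨N, hN, hw⟩ := exists_matchOK_matchWt_eq (a :: A) B
      refine ⟨shift 0 1 N, (matchOK_shift_iff (A := a :: A) (B := B) [] [b]).2 hN, ?_⟩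
      rw [show matchWt _ (a :: A) (b :: B) (shift 0 1 N) = _ from matchWt_shift _ [] [b], hw, hed]
      simp only [List.map_cons, List.sum_cons]
      ring
termination_by A B => A.length + B.length

theorem isGreatest_simSet (A B : List ℤ) :
    IsGreatest (simSet (fun a b => δdel a + δins b - δ a b) A B)
      ((A.map δdel).sum + (B.map δins).sum - ed δ δdel δins A B) := by
  obtain ⟨M, hM, hw⟩ := exists_matchOK_matchWt_eq δ δdel δins A B
  refine ⟨⟨M, hM, hw.symm⟩, ?_⟩
  rintro _ ⟨N, hN, rfl⟩
  exact matchWt_le_sum_sub_ed δ δdel δins A B N hN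

end Similarity

theorem stmt0_general (δ : ℤ → ℤ → ℤ) (δdel δins : ℤ → ℤ)
    (A B : List ℤ) (S : ℤ)
    (hS : IsGreatest (simSet (fun a b => δdel a + δins b - δ a b) A B) S) :
    S = (A.map δdel).sum + (B.map δins).sum - ed δ δdel δins A B :=
  hS.unique (isGreatest_simSet δ δdel δins A B)

/-- `sim(A,B) = Σᵢ δ(aᵢ,ε) + Σⱼ δ(ε,bⱼ) - ed(A,B)` where
`η(a,b) = δ(a,ε) + δ(ε,b) - δ(a,b)`. -/
theorem stmt0 (δ : ℤ → ℤ → ℤ) (δdel δins : ℤ → ℤ)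
    (hsub : ∀ a b, δ a b ≤ δdel a + δins b)
    (hdiag : ∀ a, δ a a = 0)
    (hδnn : ∀ a b, 0 ≤ δ a b) (hdelnn : ∀ a, 0 ≤ δdel a) (hinsnn : ∀ b, 0 ≤ δins b)
    (A B : List ℤ) (S : ℤ)
    (hS : IsGreatest (simSet (fun a b => δdel a + δins b - δ a b) A B) S) :
    S = (A.map δdel).sum + (B.map δins).sum - ed δ δdel δins A B :=
  stmt0_general δ δdel δins A B S hS

end Stmt0
end

section
/- Forest similarity is superadditive over bi-order splits: for all forests F, F', indices x ≤ z ≤ y in [1, 2|F|+1] and x' ≤ z' ≤ y' in [1, 2|F'|+1], sim(F[x..y), F'[x'..y')) ≥ sim(F[x..z), F'[x'..z')) + sim(F[z..y), F'[z'..y')). -/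
namespace Stmt5

/-- An ordered forest on node set `Fin n`, encoded by its bi-order traversal:
`l v` is the (1-based) position of the first occurrence of `v`, and `r v` is
one plus the position of the second occurrence. The positions `1, …, 2n` are
occupied by exactly one occurrence each, and occurrence intervals are
well-nested. -/
structure BiForest (n : ℕ) where
  l : Fin n → ℕ
  r : Fin n → ℕ
  one_le_l : ∀ v, 1 ≤ l v
  l_add_two_le_r : ∀ v, l v + 2 ≤ r v
  r_le : ∀ v, r v ≤ 2 * n + 1
  occ_inj : Function.Injective
    (Sum.elim (fun v => l v) (fun v => r v - 1) : Fin n ⊕ Fin n → ℕ)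
  nested : ∀ u v : Fin n,
    r u ≤ l v ∨ r v ≤ l u ∨ (l u ≤ l v ∧ r v ≤ r u) ∨ (l v ≤ l u ∧ r u ≤ r v)

variable {n n' : ℕ}

/-- Membership of a node `v` in the subforest `F[x..y)`: both bi-order
occurrences of `v` lie in positions `x, …, y-1`. -/
def BiForest.mem (F : BiForest n) (x y : ℕ) (v : Fin n) : Prop :=
  x ≤ F.l v ∧ F.r v ≤ y

/-- Two matched pairs are compatible if they consist of distinct nodes and
preserve the ancestor relations and the left-to-right (pre-order) order in
both directions; equivalently, the `l`-order and the `r`-order are preserved. -/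
def Compat (F : BiForest n) (F' : BiForest n') (p q : Fin n × Fin n') : Prop :=
  p.1 ≠ q.1 ∧ p.2 ≠ q.2 ∧
  (F.l p.1 < F.l q.1 ↔ F'.l p.2 < F'.l q.2) ∧
  (F.r p.1 < F.r q.1 ↔ F'.r p.2 < F'.r q.2)

/-- A valid similarity mapping between `F` and `F'`. -/
def IsMapping (F : BiForest n) (F' : BiForest n') (M : List (Fin n × Fin n')) : Prop :=
  M.Pairwise (Compat F F')

/-- Total weight of a mapping under the weight function `η`. -/
def wt (η : Fin n → Fin n' → ℤ) (M : List (Fin n × Fin n')) : ℤ :=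
  (M.map (fun p => η p.1 p.2)).sum

/-- The set of achievable mapping weights, where matched nodes are restricted
by the predicates `P` (on `F`) and `P'` (on `F'`); its greatest element is the
similarity of the corresponding subforests. -/
def simSetP (F : BiForest n) (F' : BiForest n') (η : Fin n → Fin n' → ℤ)
    (P : Fin n → Prop) (P' : Fin n' → Prop) : Set ℤ :=
  {s | ∃ M, IsMapping F F' M ∧ (∀ p ∈ M, P p.1 ∧ P' p.2) ∧ s = wt η M}

/-- The set of achievable mapping weights between the subforests `F[x..y)` and
`F'[x'..y')`; its greatest element is `sim(F[x..y), F'[x'..y'))`. -/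
def simSet (F : BiForest n) (F' : BiForest n') (η : Fin n → Fin n' → ℤ)
    (x y x' y' : ℕ) : Set ℤ :=
  simSetP F F' η (F.mem x y) (F'.mem x' y')

/-! Concatenating optimal mappings of the two halves gives a mapping of the whole: every node of
`F[x..z)` closes before any node of `F[z..y)` opens, and likewise in `F'`, so pairs taken from
different halves preserve both the `l`-order and the `r`-order. -/

open scoped Pointwise

namespace BiForest

variable (F : BiForest n)

theorem l_lt_r (v : Fin n) : F.l v < F.r v := by
  have := F.l_add_two_le_r v
  omega

theorem l_lt_l_of_r_le {u v : Fin n} (h : F.r u ≤ F.l v) : F.l u < F.l v :=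
  (F.l_lt_r u).trans_le h

theorem r_lt_r_of_r_le {u v : Fin n} (h : F.r u ≤ F.l v) : F.r u < F.r v :=
  h.trans_lt (F.l_lt_r v)

variable {F}

theorem mem.mono {x y x₀ y₀ : ℕ} {v : Fin n} (hx : x₀ ≤ x) (hy : y ≤ y₀) (h : F.mem x y v) :
    F.mem x₀ y₀ v :=
  ⟨hx.trans h.1, h.2.trans hy⟩

theorem r_le_l_of_mem_of_mem {x z y : ℕ} {u v : Fin n} (hu : F.mem x z u) (hv : F.mem z y v) :
    F.r u ≤ F.l v :=
  hu.2.trans hv.1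

end BiForest

variable {F : BiForest n} {F' : BiForest n'}

theorem compat_of_r_le {p q : Fin n × Fin n'} (h : F.r p.1 ≤ F.l q.1) (h' : F'.r p.2 ≤ F'.l q.2) :
    Compat F F' p q :=
  ⟨fun hpq => (F.l_lt_l_of_r_le h).ne (congrArg F.l hpq),
    fun hpq => (F'.l_lt_l_of_r_le h').ne (congrArg F'.l hpq),
    iff_of_true (F.l_lt_l_of_r_le h) (F'.l_lt_l_of_r_le h'),
    iff_of_true (F.r_lt_r_of_r_le h) (F'.r_lt_r_of_r_le h')⟩

theorem wt_append (η : Fin n → Fin n' → ℤ) (M₁ M₂ : List (Fin n × Fin n')) :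
    wt η (M₁ ++ M₂) = wt η M₁ + wt η M₂ := by
  simp [wt]

theorem simSet_add_simSet_subset (η : Fin n → Fin n' → ℤ) {x z y x' z' y' : ℕ}
    (hxz : x ≤ z) (hzy : z ≤ y) (hxz' : x' ≤ z') (hzy' : z' ≤ y') :
    simSet F F' η x z x' z' + simSet F F' η z y z' y' ⊆ simSet F F' η x y x' y' := by
  rintro _ ⟨_, ⟨M₁, hM₁, hmem₁, rfl⟩, _, ⟨M₂, hM₂, hmem₂, rfl⟩, rfl⟩
  refine ⟨M₁ ++ M₂, ?_, ?_, (wt_append η M₁ M₂).symm⟩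
  · refine List.pairwise_append.mpr ⟨hM₁, hM₂, fun p hp q hq => ?_⟩
    exact compat_of_r_le (BiForest.r_le_l_of_mem_of_mem (hmem₁ p hp).1 (hmem₂ q hq).1)
      (BiForest.r_le_l_of_mem_of_mem (hmem₁ p hp).2 (hmem₂ q hq).2)
  · intro p hp
    rcases List.mem_append.mp hp with hp | hp
    · exact ⟨(hmem₁ p hp).1.mono le_rfl hzy, (hmem₁ p hp).2.mono le_rfl hzy'⟩
    · exact ⟨(hmem₂ p hp).1.mono hxz le_rfl, (hmem₂ p hp).2.mono hxz' le_rfl⟩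

theorem stmt5_general (F : BiForest n) (F' : BiForest n') (η : Fin n → Fin n' → ℤ)
    (x z y x' z' y' : ℕ)
    (hxz : x ≤ z) (hzy : z ≤ y)
    (hxz' : x' ≤ z') (hzy' : z' ≤ y')
    (S S₁ S₂ : ℤ)
    (hS : IsGreatest (simSet F F' η x y x' y') S)
    (hS₁ : IsGreatest (simSet F F' η x z x' z') S₁)
    (hS₂ : IsGreatest (simSet F F' η z y z' y') S₂) :
    S₁ + S₂ ≤ S :=
  hS.2 (simSet_add_simSet_subset η hxz hzy hxz' hzy' (Set.add_mem_add hS₁.1 hS₂.1))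

/-- forest similarity is superadditive over bi-order splits:
`sim(F[x..y), F'[x'..y')) ≥ sim(F[x..z), F'[x'..z')) + sim(F[z..y), F'[z'..y'))`. -/
theorem stmt5 (F : BiForest n) (F' : BiForest n') (η : Fin n → Fin n' → ℤ)
    (x z y x' z' y' : ℕ)
    (hx : 1 ≤ x) (hxz : x ≤ z) (hzy : z ≤ y) (hy : y ≤ 2 * n + 1)
    (hx' : 1 ≤ x') (hxz' : x' ≤ z') (hzy' : z' ≤ y') (hy' : y' ≤ 2 * n' + 1)
    (S S₁ S₂ : ℤ)
    (hS : IsGreatest (simSet F F' η x y x' y') S)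
    (hS₁ : IsGreatest (simSet F F' η x z x' z') S₁)
    (hS₂ : IsGreatest (simSet F F' η z y z' y') S₂) :
    S₁ + S₂ ≤ S :=
  stmt5_general F F' η x z y x' z' y' hxz hzy hxz' hzy' S S₁ S₂ hS hS₁ hS₂

end Stmt5
end

section
/- Anchor transformation: let (z,z') be an anchor of sim(F[x..y), F'[x'..y')) and suppose B is an anchor set of sim(F[z..y), F'[z'..y')). Then (i) for any anchor set A of sim(F[x..y), F'[x'..y')) containing (z,z'), the sets A and B are paired anchor sets of sim(F[x..y), F'[x'..y')); and (ii) B is itself an anchor set of sim(F[x..y), F'[x'..y')). -/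
/-!
Mappings of adjacent blocks `F[x..m) × F'[x'..m')` and `F[m..y) × F'[m'..y')` concatenate,
so similarity is superadditive across a split point. Splitting the suffix at an anchor
`(w, w')` of `sim(F[z..y), F'[z'..y'))` turns the split at `(z, z')` into a three-way split
of `sim(F[x..y), F'[x'..y'))`; superadditivity then forces its first two summands to add up
to `sim(F[x..w), F'[x'..w'))`, so `(w, w')` is an anchor as well.
-/

namespace Stmt7

/-- An ordered forest on node set `Fin n`, encoded by its bi-order traversal:
`l v` is the (1-based) position of the first occurrence of `v`, and `r v` is
one plus the position of the second occurrence. The positions `1, …, 2n` are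
occupied by exactly one occurrence each, and occurrence intervals are
well-nested. -/
structure BiForest (n : ℕ) where
  l : Fin n → ℕ
  r : Fin n → ℕ
  one_le_l : ∀ v, 1 ≤ l v
  l_add_two_le_r : ∀ v, l v + 2 ≤ r v
  r_le : ∀ v, r v ≤ 2 * n + 1
  occ_inj : Function.Injective
    (Sum.elim (fun v => l v) (fun v => r v - 1) : Fin n ⊕ Fin n → ℕ)
  nested : ∀ u v : Fin n,
    r u ≤ l v ∨ r v ≤ l u ∨ (l u ≤ l v ∧ r v ≤ r u) ∨ (l v ≤ l u ∧ r u ≤ r v)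

variable {n n' : ℕ}

/-- Membership of a node `v` in the subforest `F[x..y)`: both bi-order
occurrences of `v` lie in positions `x, …, y-1`. -/
def BiForest.mem (F : BiForest n) (x y : ℕ) (v : Fin n) : Prop :=
  x ≤ F.l v ∧ F.r v ≤ y

/-- Two matched pairs are compatible if they consist of distinct nodes and
preserve the ancestor relations and the left-to-right (pre-order) order in
both directions; equivalently, the `l`-order and the `r`-order are preserved. -/
def Compat (F : BiForest n) (F' : BiForest n') (p q : Fin n × Fin n') : Prop :=
  p.1 ≠ q.1 ∧ p.2 ≠ q.2 ∧
  (F.l p.1 < F.l q.1 ↔ F'.l p.2 < F'.l q.2) ∧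
  (F.r p.1 < F.r q.1 ↔ F'.r p.2 < F'.r q.2)

/-- A valid similarity mapping between `F` and `F'`. -/
def IsMapping (F : BiForest n) (F' : BiForest n') (M : List (Fin n × Fin n')) : Prop :=
  M.Pairwise (Compat F F')

/-- Total weight of a mapping under the weight function `η`. -/
def wt (η : Fin n → Fin n' → ℤ) (M : List (Fin n × Fin n')) : ℤ :=
  (M.map (fun p => η p.1 p.2)).sum

/-- The set of achievable mapping weights, where matched nodes are restricted
by the predicates `P` (on `F`) and `P'` (on `F'`); its greatest element is the
similarity of the corresponding subforests. -/
def simSetP (F : BiForest n) (F' : BiForest n') (η : Fin n → Fin n' → ℤ)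
    (P : Fin n → Prop) (P' : Fin n' → Prop) : Set ℤ :=
  {s | ∃ M, IsMapping F F' M ∧ (∀ p ∈ M, P p.1 ∧ P' p.2) ∧ s = wt η M}

/-- The set of achievable mapping weights between the subforests `F[x..y)` and
`F'[x'..y')`; its greatest element is `sim(F[x..y), F'[x'..y'))`. -/
def simSet (F : BiForest n) (F' : BiForest n') (η : Fin n → Fin n' → ℤ)
    (x y x' y' : ℕ) : Set ℤ :=
  simSetP F F' η (F.mem x y) (F'.mem x' y')

/-- `(z, z')` is an anchor of `sim(F[x..y), F'[x'..y'))`: the similarity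
splits additively at `(z, z')`. -/
def IsAnchor (F : BiForest n) (F' : BiForest n') (η : Fin n → Fin n' → ℤ)
    (x y x' y' z z' : ℕ) : Prop :=
  x ≤ z ∧ z ≤ y ∧ x' ≤ z' ∧ z' ≤ y' ∧
  ∃ S S₁ S₂ : ℤ,
    IsGreatest (simSet F F' η x y x' y') S ∧
    IsGreatest (simSet F F' η x z x' z') S₁ ∧
    IsGreatest (simSet F F' η z y z' y') S₂ ∧
    S = S₁ + S₂

/-- `B` is an anchor set of `sim(F[x..y), F'[x'..y'))`: it contains an anchor. -/
def IsAnchorSet (F : BiForest n) (F' : BiForest n') (η : Fin n → Fin n' → ℤ)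
    (x y x' y' : ℕ) (B : Set (ℕ × ℕ)) : Prop :=
  ∃ p ∈ B, IsAnchor F F' η x y x' y' p.1 p.2

/-- `B, B'` are paired anchor sets of `sim(F[x..y), F'[x'..y'))`: they contain
paired anchors realizing a three-way additive split of the similarity. -/
def ArePairedAnchorSets (F : BiForest n) (F' : BiForest n') (η : Fin n → Fin n' → ℤ)
    (x y x' y' : ℕ) (B B' : Set (ℕ × ℕ)) : Prop :=
  ∃ p ∈ B, ∃ q ∈ B',
    x ≤ p.1 ∧ p.1 ≤ q.1 ∧ q.1 ≤ y ∧ x' ≤ p.2 ∧ p.2 ≤ q.2 ∧ q.2 ≤ y' ∧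
    ∃ S S₁ S₂ S₃ : ℤ,
      IsGreatest (simSet F F' η x y x' y') S ∧
      IsGreatest (simSet F F' η x p.1 x' p.2) S₁ ∧
      IsGreatest (simSet F F' η p.1 q.1 p.2 q.2) S₂ ∧
      IsGreatest (simSet F F' η q.1 y q.2 y') S₃ ∧
      S = S₁ + S₂ + S₃

section Splitting

variable {F : BiForest n} {F' : BiForest n'} {η : Fin n → Fin n' → ℤ}

theorem compat_of_mem_of_mem {x m y x' m' y' : ℕ} {p q : Fin n × Fin n'}
    (hp : F.mem x m p.1 ∧ F'.mem x' m' p.2) (hq : F.mem m y q.1 ∧ F'.mem m' y' q.2) :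
    Compat F F' p q := by
  obtain ⟨⟨-, hpr⟩, -, hpr'⟩ := hp
  obtain ⟨⟨hql, -⟩, hql', -⟩ := hq
  have := F.l_add_two_le_r p.1
  have := F.l_add_two_le_r q.1
  have := F'.l_add_two_le_r p.2
  have := F'.l_add_two_le_r q.2
  refine ⟨fun h => ?_, fun h => ?_, ?_, ?_⟩
  · rw [h] at hpr; omega
  · rw [h] at hpr'; omega
  · constructor <;> intro <;> omega
  · constructor <;> intro <;> omega

theorem add_mem_simSet {x m y x' m' y' : ℕ} (hxm : x ≤ m) (hx'm' : x' ≤ m') (hmy : m ≤ y)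
    (hm'y' : m' ≤ y') {a b : ℤ} (ha : a ∈ simSet F F' η x m x' m')
    (hb : b ∈ simSet F F' η m y m' y') :
    a + b ∈ simSet F F' η x y x' y' := by
  obtain ⟨M₁, hM₁, hP₁, rfl⟩ := ha
  obtain ⟨M₂, hM₂, hP₂, rfl⟩ := hb
  refine ⟨M₁ ++ M₂, ?_, fun p hp => ?_, by simp [wt]⟩
  · exact List.pairwise_append.mpr
      ⟨hM₁, hM₂, fun p hp q hq => compat_of_mem_of_mem (hP₁ p hp) (hP₂ q hq)⟩
  · rcases List.mem_append.mp hp with h | h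
    · obtain ⟨⟨h1, h2⟩, h3, h4⟩ := hP₁ p h
      exact ⟨⟨h1, h2.trans hmy⟩, h3, h4.trans hm'y'⟩
    · obtain ⟨⟨h1, h2⟩, h3, h4⟩ := hP₂ p h
      exact ⟨⟨hxm.trans h1, h2⟩, hx'm'.trans h3, h4⟩

theorem isGreatest_simSet_of_three_split {x z w y x' z' w' y' : ℕ} (hxz : x ≤ z)
    (hzw : z ≤ w) (hwy : w ≤ y) (hx'z' : x' ≤ z') (hz'w' : z' ≤ w') (hw'y' : w' ≤ y')
    {S S₁ S₂ S₃ : ℤ} (hS : IsGreatest (simSet F F' η x y x' y') S)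
    (hS₁ : IsGreatest (simSet F F' η x z x' z') S₁)
    (hS₂ : IsGreatest (simSet F F' η z w z' w') S₂)
    (hS₃ : IsGreatest (simSet F F' η w y w' y') S₃) (hsum : S = S₁ + S₂ + S₃) :
    IsGreatest (simSet F F' η x w x' w') (S₁ + S₂) := by
  refine ⟨add_mem_simSet hxz hx'z' hzw hz'w' hS₁.1 hS₂.1, fun s hs => ?_⟩
  have := hS.2 (add_mem_simSet (hxz.trans hzw) (hx'z'.trans hz'w') hwy hw'y' hs hS₃.1)
  omega

end Splitting

/-- anchor transformation: let `(z,z')` be an anchor of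
`sim(F[x..y), F'[x'..y'))` and let `B` be an anchor set of
`sim(F[z..y), F'[z'..y'))`. Then (i) for any anchor set `A` of
`sim(F[x..y), F'[x'..y'))` containing `(z,z')`, the sets `A` and `B` are
paired anchor sets of `sim(F[x..y), F'[x'..y'))`; and (ii) `B` is itself an
anchor set of `sim(F[x..y), F'[x'..y'))`. -/
theorem stmt7 (F : BiForest n) (F' : BiForest n') (η : Fin n → Fin n' → ℤ)
    (x y x' y' z z' : ℕ) (B : Set (ℕ × ℕ))
    (hanch : IsAnchor F F' η x y x' y' z z')
    (hB : IsAnchorSet F F' η z y z' y' B) :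
    (∀ A : Set (ℕ × ℕ), IsAnchorSet F F' η x y x' y' A → (z, z') ∈ A →
        ArePairedAnchorSets F F' η x y x' y' A B) ∧
    IsAnchorSet F F' η x y x' y' B := by
  obtain ⟨hxz, -, hx'z', -, S, S₁, S₂, hS, hS₁, hS₂, hsum⟩ := hanch
  obtain ⟨⟨w, w'⟩, hwB, hzw, hwy, hz'w', hw'y', S₂', T₁, T₂, hS₂', hT₁, hT₂, hsum'⟩ := hB
  have hsplit : S = S₁ + T₁ + T₂ := by rw [hsum, hS₂.unique hS₂', hsum', add_assoc]
  constructor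
  · exact fun A _ hzA => ⟨(z, z'), hzA, (w, w'), hwB, hxz, hzw, hwy, hx'z', hz'w', hw'y',
      S, S₁, T₁, T₂, hS, hS₁, hT₁, hT₂, hsplit⟩
  · have hprefix : IsGreatest (simSet F F' η x w x' w') (S₁ + T₁) :=
      isGreatest_simSet_of_three_split hxz hzw hwy hx'z' hz'w' hw'y' hS hS₁ hT₁ hT₂ hsplit
    exact ⟨(w, w'), hwB, hxz.trans hzw, hwy, hx'z'.trans hz'w', hw'y',
      S, S₁ + T₁, T₂, hS, hprefix, hT₂, hsplit⟩

end Stmt7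
end

section
/- Corner anchor lemma: suppose for subforests F[x..y), F'[x'..y') there exist nodes v ∈ F[x..y), v' ∈ F'[x'..y') such that sim(F[x..y), F'[x'..y')) = sim(F[x..l(v)) + F[l(v)..y), F'[x'..l(v')) + F'[l(v')..y')). Then the L-shaped set ({l(v)} × [1, l(v')]) ∪ ([1, l(v)] × {l(v')}) is an anchor set of sim(F[x..y), F'[x'..y')). -/
namespace Stmt8

/-- An ordered forest on node set `Fin n`, encoded by its bi-order traversal:
`l v` is the (1-based) position of the first occurrence of `v`, and `r v` is
one plus the position of the second occurrence. The positions `1, …, 2n` are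
occupied by exactly one occurrence each, and occurrence intervals are
well-nested. -/
structure BiForest (n : ℕ) where
  l : Fin n → ℕ
  r : Fin n → ℕ
  one_le_l : ∀ v, 1 ≤ l v
  l_add_two_le_r : ∀ v, l v + 2 ≤ r v
  r_le : ∀ v, r v ≤ 2 * n + 1
  occ_inj : Function.Injective
    (Sum.elim (fun v => l v) (fun v => r v - 1) : Fin n ⊕ Fin n → ℕ)
  nested : ∀ u v : Fin n,
    r u ≤ l v ∨ r v ≤ l u ∨ (l u ≤ l v ∧ r v ≤ r u) ∨ (l v ≤ l u ∧ r u ≤ r v)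

variable {n n' : ℕ}

/-- Membership of a node `v` in the subforest `F[x..y)`: both bi-order
occurrences of `v` lie in positions `x, …, y-1`. -/
def BiForest.mem (F : BiForest n) (x y : ℕ) (v : Fin n) : Prop :=
  x ≤ F.l v ∧ F.r v ≤ y

/-- Two matched pairs are compatible if they consist of distinct nodes and
preserve the ancestor relations and the left-to-right (pre-order) order in
both directions; equivalently, the `l`-order and the `r`-order are preserved. -/
def Compat (F : BiForest n) (F' : BiForest n') (p q : Fin n × Fin n') : Prop :=
  p.1 ≠ q.1 ∧ p.2 ≠ q.2 ∧
  (F.l p.1 < F.l q.1 ↔ F'.l p.2 < F'.l q.2) ∧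
  (F.r p.1 < F.r q.1 ↔ F'.r p.2 < F'.r q.2)

/-- A valid similarity mapping between `F` and `F'`. -/
def IsMapping (F : BiForest n) (F' : BiForest n') (M : List (Fin n × Fin n')) : Prop :=
  M.Pairwise (Compat F F')

/-- Total weight of a mapping under the weight function `η`. -/
def wt (η : Fin n → Fin n' → ℤ) (M : List (Fin n × Fin n')) : ℤ :=
  (M.map (fun p => η p.1 p.2)).sum

/-- The set of achievable mapping weights, where matched nodes are restricted
by the predicates `P` (on `F`) and `P'` (on `F'`); its greatest element is the
similarity of the corresponding subforests. -/
def simSetP (F : BiForest n) (F' : BiForest n') (η : Fin n → Fin n' → ℤ)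
    (P : Fin n → Prop) (P' : Fin n' → Prop) : Set ℤ :=
  {s | ∃ M, IsMapping F F' M ∧ (∀ p ∈ M, P p.1 ∧ P' p.2) ∧ s = wt η M}

/-- The set of achievable mapping weights between the subforests `F[x..y)` and
`F'[x'..y')`; its greatest element is `sim(F[x..y), F'[x'..y'))`. -/
def simSet (F : BiForest n) (F' : BiForest n') (η : Fin n → Fin n' → ℤ)
    (x y x' y' : ℕ) : Set ℤ :=
  simSetP F F' η (F.mem x y) (F'.mem x' y')

/-- `(z, z')` is an anchor of `sim(F[x..y), F'[x'..y'))`: the similarity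
splits additively at `(z, z')`. -/
def IsAnchor (F : BiForest n) (F' : BiForest n') (η : Fin n → Fin n' → ℤ)
    (x y x' y' z z' : ℕ) : Prop :=
  x ≤ z ∧ z ≤ y ∧ x' ≤ z' ∧ z' ≤ y' ∧
  ∃ S S₁ S₂ : ℤ,
    IsGreatest (simSet F F' η x y x' y') S ∧
    IsGreatest (simSet F F' η x z x' z') S₁ ∧
    IsGreatest (simSet F F' η z y z' y') S₂ ∧
    S = S₁ + S₂

/-- `B` is an anchor set of `sim(F[x..y), F'[x'..y'))`: it contains an anchor. -/
def IsAnchorSet (F : BiForest n) (F' : BiForest n') (η : Fin n → Fin n' → ℤ)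
    (x y x' y' : ℕ) (B : Set (ℕ × ℕ)) : Prop :=
  ∃ p ∈ B, IsAnchor F F' η x y x' y' p.1 p.2

/-- `B, B'` are paired anchor sets of `sim(F[x..y), F'[x'..y'))`: they contain
paired anchors realizing a three-way additive split of the similarity. -/
def ArePairedAnchorSets (F : BiForest n) (F' : BiForest n') (η : Fin n → Fin n' → ℤ)
    (x y x' y' : ℕ) (B B' : Set (ℕ × ℕ)) : Prop :=
  ∃ p ∈ B, ∃ q ∈ B',
    x ≤ p.1 ∧ p.1 ≤ q.1 ∧ q.1 ≤ y ∧ x' ≤ p.2 ∧ p.2 ≤ q.2 ∧ q.2 ≤ y' ∧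
    ∃ S S₁ S₂ S₃ : ℤ,
      IsGreatest (simSet F F' η x y x' y') S ∧
      IsGreatest (simSet F F' η x p.1 x' p.2) S₁ ∧
      IsGreatest (simSet F F' η p.1 q.1 p.2 q.2) S₂ ∧
      IsGreatest (simSet F F' η q.1 y q.2 y') S₃ ∧
      S = S₁ + S₂ + S₃

/-! An optimal mapping for the split similarity matches every node on the left or the right of
`l(v)` to a node on the left or the right of `l(v')`. Pairs of the two mixed kinds
(left, right) and (right, left) cannot coexist, since they would cross. If there is a
(left, right) pair, let `z` be the least first occurrence of its `F`-node among such pairs: every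
(left, left) pair lies before that pair in both forests, hence before `z`, and the mapping splits
at `(z, l(v'))`. The (right, left) case is the mirror image, and without mixed pairs the mapping
splits at `(l(v), l(v'))`. A mapping that splits at `(z, z')` shows that `(z, z')` is an anchor,
because optimal mappings of the two blocks can always be concatenated. -/

namespace BiForest

variable (F : BiForest n)

lemma l_injective : Function.Injective F.l := fun a b h =>
  Sum.inl_injective (F.occ_inj (by simpa using h))

lemma r_injective : Function.Injective F.r := fun a b h =>
  Sum.inr_injective (F.occ_inj (by simp [h]))

variable {F}

lemma r_le_l_of_lt_of_lt {a b : Fin n} (hl : F.l a < F.l b) (hr : F.r a < F.r b) :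
    F.r a ≤ F.l b := by
  have := F.l_add_two_le_r a
  have := F.l_add_two_le_r b
  rcases F.nested a b with h | h | h | h <;> omega

end BiForest

section Mappings

variable {F : BiForest n} {F' : BiForest n'} {p q : Fin n × Fin n'}

lemma Compat.symm (h : Compat F F' p q) : Compat F F' q p := by
  obtain ⟨h₁, h₂, hl, hr⟩ := h
  have := mt (F.l_injective ·) h₁
  have := mt (F'.l_injective ·) h₂
  have := mt (F.r_injective ·) h₁
  have := mt (F'.r_injective ·) h₂
  exact ⟨Ne.symm h₁, Ne.symm h₂, by omega, by omega⟩

instance : Std.Symm (Compat F F') := ⟨fun _ _ => Compat.symm⟩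

lemma Compat.swap (h : Compat F F' p q) : Compat F' F p.swap q.swap :=
  ⟨h.2.1, h.1, h.2.2.1.symm, h.2.2.2.symm⟩

lemma compat_of_r_le_l (h : F.r p.1 ≤ F.l q.1) (h' : F'.r p.2 ≤ F'.l q.2) :
    Compat F F' p q := by
  have := F.l_add_two_le_r p.1
  have := F'.l_add_two_le_r p.2
  have := F.l_add_two_le_r q.1
  have := F'.l_add_two_le_r q.2
  refine ⟨fun he => ?_, fun he => ?_, by omega, by omega⟩
  · rw [he] at h; omega
  · rw [he] at h'; omega

lemma Compat.r_le_l_iff (h : Compat F F' p q) :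
    F.r p.1 ≤ F.l q.1 ↔ F'.r p.2 ≤ F'.l q.2 := by
  obtain ⟨-, -, hl, hr⟩ := h
  have := F.l_add_two_le_r p.1
  have := F'.l_add_two_le_r p.2
  have := F.l_add_two_le_r q.1
  have := F'.l_add_two_le_r q.2
  constructor <;> intro h
  · exact BiForest.r_le_l_of_lt_of_lt (hl.1 (by omega)) (hr.1 (by omega))
  · exact BiForest.r_le_l_of_lt_of_lt (hl.2 (by omega)) (hr.2 (by omega))

variable {M : List (Fin n × Fin n')}

lemma IsMapping.map_swap (hM : IsMapping F F' M) : IsMapping F' F (M.map Prod.swap) :=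
  List.pairwise_map.2 (hM.imp Compat.swap)

lemma IsMapping.r_le_l_iff (hM : IsMapping F F' M) (hp : p ∈ M) (hq : q ∈ M) :
    F.r p.1 ≤ F.l q.1 ↔ F'.r p.2 ≤ F'.l q.2 := by
  by_cases hpq : p = q
  · subst hpq
    have := F.l_add_two_le_r p.1
    have := F'.l_add_two_le_r p.2
    omega
  · exact (hM.forall hp hq hpq).r_le_l_iff

end Mappings

section Anchors

variable {F : BiForest n} {F' : BiForest n'} {η : Fin n → Fin n' → ℤ}
  {x y x' y' z z' : ℕ} {M : List (Fin n × Fin n')}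

def IsSplitAt (F : BiForest n) (F' : BiForest n') (x y x' y' z z' : ℕ)
    (M : List (Fin n × Fin n')) : Prop :=
  ∀ p ∈ M, (F.mem x z p.1 ∧ F'.mem x' z' p.2) ∨ (F.mem z y p.1 ∧ F'.mem z' y' p.2)

lemma IsSplitAt.of_map_swap (h : IsSplitAt F' F x' y' x y z' z (M.map Prod.swap)) :
    IsSplitAt F F' x y x' y' z z' M := fun p hp =>
  (h p.swap (List.mem_map_of_mem hp)).imp And.symm And.symm

lemma add_mem_simSet {s₁ s₂ : ℤ} (hxz : x ≤ z) (hzy : z ≤ y) (hx'z' : x' ≤ z')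
    (hz'y' : z' ≤ y') (h₁ : s₁ ∈ simSet F F' η x z x' z') (h₂ : s₂ ∈ simSet F F' η z y z' y') :
    s₁ + s₂ ∈ simSet F F' η x y x' y' := by
  obtain ⟨M₁, hM₁, hmem₁, rfl⟩ := h₁
  obtain ⟨M₂, hM₂, hmem₂, rfl⟩ := h₂
  refine ⟨M₁ ++ M₂, List.pairwise_append.2 ⟨hM₁, hM₂, fun p hp q hq => ?_⟩, fun p hp => ?_, ?_⟩
  · exact compat_of_r_le_l ((hmem₁ p hp).1.2.trans (hmem₂ q hq).1.1)
      ((hmem₁ p hp).2.2.trans (hmem₂ q hq).2.1)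
  · rcases List.mem_append.1 hp with hp | hp
    · obtain ⟨⟨h₁, h₂⟩, h₁', h₂'⟩ := hmem₁ p hp
      exact ⟨⟨h₁, h₂.trans hzy⟩, h₁', h₂'.trans hz'y'⟩
    · obtain ⟨⟨h₁, h₂⟩, h₁', h₂'⟩ := hmem₂ p hp
      exact ⟨⟨hxz.trans h₁, h₂⟩, hx'z'.trans h₁', h₂'⟩
  · simp [wt]

lemma IsSplitAt.exists_wt_eq_add (hM : IsMapping F F' M) (h : IsSplitAt F F' x y x' y' z z' M) :
    ∃ s₁ ∈ simSet F F' η x z x' z', ∃ s₂ ∈ simSet F F' η z y z' y', wt η M = s₁ + s₂ := by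
  classical
  let lower : Fin n × Fin n' → Bool := fun p => F.mem x z p.1 ∧ F'.mem x' z' p.2
  refine ⟨_, ⟨M.filter lower, hM.sublist List.filter_sublist, fun p hp => ?_, rfl⟩,
    _, ⟨M.filter (!lower ·), hM.sublist List.filter_sublist, fun p hp => ?_, rfl⟩, ?_⟩
  · simpa [lower] using (List.mem_filter.1 hp).2
  · obtain ⟨hp, hnot⟩ := List.mem_filter.1 hp
    exact (h p hp).resolve_left fun hlower => by simp [lower, hlower] at hnot
  · simpa [wt] using (((List.filter_append_perm lower M).map fun p => η p.1 p.2).sum_eq).symm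

/-- Optimality of the whole forces both summands to be optimal on their blocks. -/
lemma isAnchor_of_add_mem {S s₁ s₂ : ℤ} (hxz : x ≤ z) (hzy : z ≤ y) (hx'z' : x' ≤ z')
    (hz'y' : z' ≤ y') (hS : IsGreatest (simSet F F' η x y x' y') S)
    (h₁ : s₁ ∈ simSet F F' η x z x' z') (h₂ : s₂ ∈ simSet F F' η z y z' y')
    (hsum : S = s₁ + s₂) : IsAnchor F F' η x y x' y' z z' := by
  refine ⟨hxz, hzy, hx'z', hz'y', S, s₁, s₂, hS, ⟨h₁, fun t ht => ?_⟩, ⟨h₂, fun t ht => ?_⟩, hsum⟩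
  · have := hS.2 (add_mem_simSet hxz hzy hx'z' hz'y' ht h₂)
    omega
  · have := hS.2 (add_mem_simSet hxz hzy hx'z' hz'y' h₁ ht)
    omega

lemma IsSplitAt.isAnchor (hS : IsGreatest (simSet F F' η x y x' y') (wt η M))
    (hM : IsMapping F F' M) (hxz : x ≤ z) (hzy : z ≤ y) (hx'z' : x' ≤ z') (hz'y' : z' ≤ y')
    (h : IsSplitAt F F' x y x' y' z z' M) : IsAnchor F F' η x y x' y' z z' := by
  obtain ⟨s₁, h₁, s₂, h₂, hsum⟩ := h.exists_wt_eq_add (η := η) hM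
  exact isAnchor_of_add_mem hxz hzy hx'z' hz'y' hS h₁ h₂ hsum

end Anchors

section Crossing

variable {F : BiForest n} {F' : BiForest n'} {x y x' y' a a' : ℕ} {M : List (Fin n × Fin n')}

lemma isSplitAt_of_isLeast_crossing (hM : IsMapping F F' M) (hay : a ≤ y)
    (hsplit : ∀ p ∈ M, (F.mem x a p.1 ∨ F.mem a y p.1) ∧ (F'.mem x' a' p.2 ∨ F'.mem a' y' p.2))
    {p₀ : Fin n × Fin n'} (hp₀ : p₀ ∈ M) (hp₀cross : F.mem x a p₀.1 ∧ F'.mem a' y' p₀.2)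
    (hmin : ∀ q ∈ M, F.mem x a q.1 → F'.mem a' y' q.2 → F.l p₀.1 ≤ F.l q.1) :
    IsSplitAt F F' x y x' y' (F.l p₀.1) a' M := by
  obtain ⟨⟨-, hr₀⟩, hl₀', -⟩ := hp₀cross
  have := F.l_add_two_le_r p₀.1
  have := F'.l_add_two_le_r p₀.2
  intro q hq
  have := F.l_add_two_le_r q.1
  have := F'.l_add_two_le_r q.2
  rcases hsplit q hq with ⟨hL | hR, hL' | hR'⟩
  · have := hL'.2
    exact .inl ⟨⟨hL.1, (hM.r_le_l_iff hq hp₀).2 (by omega)⟩, hL'⟩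
  · have := hL.2
    exact .inr ⟨⟨hmin q hq hL hR', by omega⟩, hR'⟩
  · have := hR.1
    have := hL'.2
    have := (hM.r_le_l_iff hp₀ hq).1 (by omega)
    omega
  · have := hR.1
    exact .inr ⟨⟨by omega, hR.2⟩, hR'⟩

lemma exists_isSplitAt_of_crossing (hM : IsMapping F F' M) (hay : a ≤ y)
    (hsplit : ∀ p ∈ M, (F.mem x a p.1 ∨ F.mem a y p.1) ∧ (F'.mem x' a' p.2 ∨ F'.mem a' y' p.2))
    (hcross : ∃ p ∈ M, F.mem x a p.1 ∧ F'.mem a' y' p.2) :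
    ∃ z, x ≤ z ∧ 1 ≤ z ∧ z ≤ a ∧ IsSplitAt F F' x y x' y' z a' M := by
  obtain ⟨p₀, ⟨hp₀, hp₀cross⟩, hmin⟩ :=
    Set.exists_min_image {p | p ∈ M ∧ F.mem x a p.1 ∧ F'.mem a' y' p.2} (F.l ·.1)
      ((List.finite_toSet M).subset fun _ hp => hp.1) hcross
  have := F.l_add_two_le_r p₀.1
  refine ⟨F.l p₀.1, hp₀cross.1.1, F.one_le_l _, by have := hp₀cross.1.2; omega,
    isSplitAt_of_isLeast_crossing hM hay hsplit hp₀ hp₀cross fun q hq hL hR => ?_⟩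
  exact hmin q ⟨hq, hL, hR⟩

end Crossing

/-- corner anchor lemma: suppose `v ∈ F[x..y)`, `v' ∈ F'[x'..y')`
and `sim(F[x..y), F'[x'..y')) = sim(F[x..l(v)) + F[l(v)..y), F'[x'..l(v')) + F'[l(v')..y'))`.
Then the L-shaped set `({l(v)} × [1, l(v')]) ∪ ([1, l(v)] × {l(v')})` is an
anchor set of `sim(F[x..y), F'[x'..y'))`. -/
theorem stmt8 (F : BiForest n) (F' : BiForest n') (η : Fin n → Fin n' → ℤ)
    (x y x' y' : ℕ) (v : Fin n) (v' : Fin n')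
    (hv : F.mem x y v) (hv' : F'.mem x' y' v')
    (S : ℤ)
    (hS : IsGreatest (simSet F F' η x y x' y') S)
    (hSsplit : IsGreatest
      (simSetP F F' η
        (fun u => F.mem x (F.l v) u ∨ F.mem (F.l v) y u)
        (fun u' => F'.mem x' (F'.l v') u' ∨ F'.mem (F'.l v') y' u')) S) :
    IsAnchorSet F F' η x y x' y'
      {p : ℕ × ℕ |
        (p.1 = F.l v ∧ 1 ≤ p.2 ∧ p.2 ≤ F'.l v') ∨
        (1 ≤ p.1 ∧ p.1 ≤ F.l v ∧ p.2 = F'.l v')} := by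
  obtain ⟨M, hM, hsplit, rfl⟩ := hSsplit.1
  have hay : F.l v ≤ y := by have := F.l_add_two_le_r v; have := hv.2; omega
  have hay' : F'.l v' ≤ y' := by have := F'.l_add_two_le_r v'; have := hv'.2; omega
  by_cases hLR : ∃ p ∈ M, F.mem x (F.l v) p.1 ∧ F'.mem (F'.l v') y' p.2
  · obtain ⟨z, hxz, hz, hza, hMz⟩ := exists_isSplitAt_of_crossing hM hay hsplit hLR
    exact ⟨(z, F'.l v'), .inr ⟨hz, hza, rfl⟩, hMz.isAnchor hS hM hxz (by omega) hv'.1 hay'⟩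
  by_cases hRL : ∃ p ∈ M, F.mem (F.l v) y p.1 ∧ F'.mem x' (F'.l v') p.2
  · obtain ⟨p, hp, hRL⟩ := hRL
    obtain ⟨z', hxz', hz', hza', hMz'⟩ := exists_isSplitAt_of_crossing hM.map_swap hay'
      (List.forall_mem_map.2 fun q hq => (hsplit q hq).symm)
      ⟨p.swap, List.mem_map_of_mem hp, hRL.symm⟩
    exact ⟨(F.l v, z'), .inl ⟨rfl, hz', hza'⟩, hMz'.of_map_swap.isAnchor hS hM hv.1 hay hxz' (by omega)⟩
  refine ⟨(F.l v, F'.l v'), .inl ⟨rfl, F'.one_le_l v', le_rfl⟩, IsSplitAt.isAnchor hS hM hv.1 hay hv'.1 hay' ?_⟩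
  intro p hp
  rcases hsplit p hp with ⟨hL | hR, hL' | hR'⟩
  · exact .inl ⟨hL, hL'⟩
  · exact absurd ⟨p, hp, hL, hR'⟩ hLR
  · exact absurd ⟨p, hp, hR, hL'⟩ hRL
  · exact .inr ⟨hR, hR'⟩

end Stmt8
end

section
/- Align-or-remove dichotomy: let v ∈ F and let P be the set of nodes strictly between the virtual root of F and v on the root-to-v path (excluding both). Then for every pair of subforests F[x..y), F'[x'..y') with sub(v) ⊆ F[x..y), at least one of the following holds: (a) there exists u ∈ P such that sim(F[x..y), F'[x'..y')) aligns sub(u) to some subtree of F'; or (b) sim(F[x..y), F'[x'..y')) = sim(F[x..l(v)) + F[l(v)..y), F'[x'..y')). -/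
namespace Stmt10

/-- An ordered forest on node set `Fin n`, encoded by its bi-order traversal:
`l v` is the (1-based) position of the first occurrence of `v`, and `r v` is
one plus the position of the second occurrence. The positions `1, …, 2n` are
occupied by exactly one occurrence each, and occurrence intervals are
well-nested. -/
structure BiForest (n : ℕ) where
  l : Fin n → ℕ
  r : Fin n → ℕ
  one_le_l : ∀ v, 1 ≤ l v
  l_add_two_le_r : ∀ v, l v + 2 ≤ r v
  r_le : ∀ v, r v ≤ 2 * n + 1
  occ_inj : Function.Injective
    (Sum.elim (fun v => l v) (fun v => r v - 1) : Fin n ⊕ Fin n → ℕ)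
  nested : ∀ u v : Fin n,
    r u ≤ l v ∨ r v ≤ l u ∨ (l u ≤ l v ∧ r v ≤ r u) ∨ (l v ≤ l u ∧ r u ≤ r v)

variable {n n' : ℕ}

/-- Membership of a node `v` in the subforest `F[x..y)`: both bi-order
occurrences of `v` lie in positions `x, …, y-1`. -/
def BiForest.mem (F : BiForest n) (x y : ℕ) (v : Fin n) : Prop :=
  x ≤ F.l v ∧ F.r v ≤ y

/-- Two matched pairs are compatible if they consist of distinct nodes and
preserve the ancestor relations and the left-to-right (pre-order) order in
both directions; equivalently, the `l`-order and the `r`-order are preserved. -/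
def Compat (F : BiForest n) (F' : BiForest n') (p q : Fin n × Fin n') : Prop :=
  p.1 ≠ q.1 ∧ p.2 ≠ q.2 ∧
  (F.l p.1 < F.l q.1 ↔ F'.l p.2 < F'.l q.2) ∧
  (F.r p.1 < F.r q.1 ↔ F'.r p.2 < F'.r q.2)

/-- A valid similarity mapping between `F` and `F'`. -/
def IsMapping (F : BiForest n) (F' : BiForest n') (M : List (Fin n × Fin n')) : Prop :=
  M.Pairwise (Compat F F')

/-- Total weight of a mapping under the weight function `η`. -/
def wt (η : Fin n → Fin n' → ℤ) (M : List (Fin n × Fin n')) : ℤ :=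
  (M.map (fun p => η p.1 p.2)).sum

/-- The set of achievable mapping weights, where matched nodes are restricted
by the predicates `P` (on `F`) and `P'` (on `F'`); its greatest element is the
similarity of the corresponding subforests. -/
def simSetP (F : BiForest n) (F' : BiForest n') (η : Fin n → Fin n' → ℤ)
    (P : Fin n → Prop) (P' : Fin n' → Prop) : Set ℤ :=
  {s | ∃ M, IsMapping F F' M ∧ (∀ p ∈ M, P p.1 ∧ P' p.2) ∧ s = wt η M}

/-- The set of achievable mapping weights between the subforests `F[x..y)` and
`F'[x'..y')`; its greatest element is `sim(F[x..y), F'[x'..y'))`. -/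
def simSet (F : BiForest n) (F' : BiForest n') (η : Fin n → Fin n' → ℤ)
    (x y x' y' : ℕ) : Set ℤ :=
  simSetP F F' η (F.mem x y) (F'.mem x' y')

/-- `u` is a proper ancestor of `v` (a node strictly between the virtual root
and `v` on the root-to-`v` path). -/
def ProperAnc (F : BiForest n) (u v : Fin n) : Prop :=
  F.l u < F.l v ∧ F.r v < F.r u

/-- `sim(F[x..y), F'[x'..y'))` aligns `sub(u)` to `sub(u')`: the similarity
splits as `sim(F[x..l(u)), F'[x'..l(u'))) + sim(sub(u), sub(u')) + sim(F[r(u)..y), F'[r(u')..y'))`. -/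
def Aligns (F : BiForest n) (F' : BiForest n') (η : Fin n → Fin n' → ℤ)
    (x y x' y' : ℕ) (u : Fin n) (u' : Fin n') : Prop :=
  ∃ S S₁ S₂ S₃ : ℤ,
    IsGreatest (simSet F F' η x y x' y') S ∧
    IsGreatest (simSet F F' η x (F.l u) x' (F'.l u')) S₁ ∧
    IsGreatest (simSet F F' η (F.l u) (F.r u) (F'.l u') (F'.r u')) S₂ ∧
    IsGreatest (simSet F F' η (F.r u) y (F'.r u') y') S₃ ∧
    S = S₁ + S₂ + S₃

/-! Fix an optimal mapping `M` of `F[x..y)` to `F'[x'..y')`. If some node of `P` is matched,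
let `u` be the outermost such node, matched to `u'`. No node matched by `M` is then a proper
ancestor of `u`, so compatibility with `(u, u')` places every other pair of `M` left of,
inside, or right of `(u, u')` simultaneously in both forests. Hence `M` splits into mappings
of the three pieces, while conversely mappings of the three pieces concatenate: the similarity
aligns `sub(u)` to `sub(u')`. If no node of `P` is matched, `M` is already a mapping of the
forest with `P` removed, which has no more mappings than `F[x..y)` itself. -/

namespace BiForest

variable (F : BiForest n)

lemma l_lt_r (v : Fin n) : F.l v < F.r v := by
  have := F.l_add_two_le_r v
  omega

lemma l_injective : Function.Injective F.l :=
  fun _ _ h => Sum.inl_injective (F.occ_inj h)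

lemma r_injective : Function.Injective F.r :=
  fun _ _ h => Sum.inr_injective (F.occ_inj (congrArg (· - 1) h))

lemma le_or_le_or_mem_of_not_properAnc {w u : Fin n} (h : ¬ ProperAnc F w u) :
    F.r w ≤ F.l u ∨ F.r u ≤ F.l w ∨ F.mem (F.l u) (F.r u) w := by
  rcases F.nested w u with h' | h' | h' | h'
  · exact Or.inl h'
  · exact Or.inr (Or.inl h')
  · obtain rfl | hwu := eq_or_ne w u
    · exact Or.inr (Or.inr ⟨le_rfl, le_rfl⟩)
    · have := F.l_injective.ne hwu
      have := F.r_injective.ne hwu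
      exact absurd ⟨by omega, by omega⟩ h
  · exact Or.inr (Or.inr h')

lemma mem_left_or_mem_right_of_not_properAnc {x y : ℕ} {w v : Fin n} (hw : F.mem x y w)
    (h : ¬ ProperAnc F w v) : F.mem x (F.l v) w ∨ F.mem (F.l v) y w := by
  have := F.l_lt_r w
  rcases F.le_or_le_or_mem_of_not_properAnc h with h' | h' | h'
  · exact Or.inl ⟨hw.1, h'⟩
  · exact Or.inr ⟨by have := F.l_lt_r v; omega, hw.2⟩
  · exact Or.inr ⟨h'.1, hw.2⟩

end BiForest

lemma ProperAnc.trans {F : BiForest n} {u v w : Fin n} (huv : ProperAnc F u v)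
    (hvw : ProperAnc F v w) : ProperAnc F u w :=
  ⟨huv.1.trans hvw.1, hvw.2.trans huv.2⟩

section Compat

variable {F : BiForest n} {F' : BiForest n'}

lemma Compat.symm {p q : Fin n × Fin n'} (h : Compat F F' p q) : Compat F F' q p := by
  obtain ⟨h₁, h₂, hl, hr⟩ := h
  have := F.l_injective.ne h₁
  have := F.r_injective.ne h₁
  have := F'.l_injective.ne h₂
  have := F'.r_injective.ne h₂
  exact ⟨h₁.symm, h₂.symm, by omega, by omega⟩

lemma compat_of_r_le_l {p q : Fin n × Fin n'} (h : F.r p.1 ≤ F.l q.1)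
    (h' : F'.r p.2 ≤ F'.l q.2) : Compat F F' p q := by
  have := F.l_lt_r p.1; have := F.l_lt_r q.1
  have := F'.l_lt_r p.2; have := F'.l_lt_r q.2
  exact ⟨fun e => by rw [e] at h; omega, fun e => by rw [e] at h'; omega, by omega, by omega⟩

lemma IsMapping.compat {M : List (Fin n × Fin n')} (hM : IsMapping F F' M)
    {p q : Fin n × Fin n'} (hp : p ∈ M) (hq : q ∈ M) (hpq : p ≠ q) : Compat F F' p q :=
  haveI : Std.Symm (Compat F F') := ⟨fun _ _ => Compat.symm⟩
  hM.forall hp hq hpq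

lemma Compat.left_or_inside_or_right {w u : Fin n} {w' u' : Fin n'}
    (hc : Compat F F' (w, w') (u, u')) (h : ¬ ProperAnc F w u) :
    (F.r w ≤ F.l u ∧ F'.r w' ≤ F'.l u') ∨
    (F.mem (F.l u) (F.r u) w ∧ F'.mem (F'.l u') (F'.r u') w') ∨
    (F.r u ≤ F.l w ∧ F'.r u' ≤ F'.l w') := by
  obtain ⟨hne, hne', hl, hr⟩ := hc
  dsimp only at hne hne' hl hr
  have := F.l_lt_r w; have := F.l_lt_r u; have := F'.l_lt_r w'; have := F'.l_lt_r u'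
  have := F.l_injective.ne hne; have := F.r_injective.ne hne
  have := F'.l_injective.ne hne'; have := F'.r_injective.ne hne'
  have := F'.nested w' u'
  rcases F.le_or_le_or_mem_of_not_properAnc h with h' | h' | ⟨h₁, h₂⟩
  · exact Or.inl ⟨h', by omega⟩
  · exact Or.inr (Or.inr ⟨h', by omega⟩)
  · exact Or.inr (Or.inl ⟨⟨h₁, h₂⟩, by omega, by omega⟩)

end Compat

section Weight

variable (η : Fin n → Fin n' → ℤ)

lemma wt_append (M N : List (Fin n × Fin n')) : wt η (M ++ N) = wt η M + wt η N := by
  simp only [wt, List.map_append, List.sum_append]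

lemma wt_filter_add_wt_filter_not (p : Fin n × Fin n' → Prop) [DecidablePred p]
    (M : List (Fin n × Fin n')) :
    wt η (M.filter (p ·)) + wt η (M.filter (¬ p ·)) = wt η M :=
  List.sum_map_filter_add_sum_map_filter_not p _ M

end Weight

section SimSet

variable {F : BiForest n} {F' : BiForest n'} {η : Fin n → Fin n' → ℤ}

lemma exists_isGreatest_simSetP (F : BiForest n) (F' : BiForest n') (η : Fin n → Fin n' → ℤ)
    (P : Fin n → Prop) (P' : Fin n' → Prop) : ∃ S, IsGreatest (simSetP F F' η P P') S := by
  have hne : (simSetP F F' η P P').Nonempty := ⟨0, [], .nil, by simp, rfl⟩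
  -- a mapping never repeats a pair, so it is no longer than the number of pairs
  have hfin : (simSetP F F' η P P').Finite := by
    refine ((List.finite_length_le _ (Fintype.card (Fin n × Fin n'))).image (wt η)).subset ?_
    rintro _ ⟨M, hM, -, rfl⟩
    exact ⟨M, List.Nodup.length_le_card (hM.imp fun hc e => hc.1 (congrArg Prod.fst e)), rfl⟩
  obtain ⟨S, hS, hmax⟩ := Set.exists_max_image _ id hfin hne
  exact ⟨S, hS, hmax⟩

lemma simSetP_mono {P Q : Fin n → Prop} {P' Q' : Fin n' → Prop} (h : ∀ w, P w → Q w)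
    (h' : ∀ w', P' w' → Q' w') : simSetP F F' η P P' ⊆ simSetP F F' η Q Q' := by
  rintro _ ⟨M, hM, hmem, rfl⟩
  exact ⟨M, hM, fun p hp => ⟨h _ (hmem p hp).1, h' _ (hmem p hp).2⟩, rfl⟩

lemma add_mem_simSet {x y z x' y' z' : ℕ} (hz : x ≤ z ∧ z ≤ y) (hz' : x' ≤ z' ∧ z' ≤ y')
    {s t : ℤ} (hs : s ∈ simSet F F' η x z x' z')
    (ht : t ∈ simSet F F' η z y z' y') : s + t ∈ simSet F F' η x y x' y' := by
  obtain ⟨M, hM, hmemM, rfl⟩ := hs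
  obtain ⟨N, hN, hmemN, rfl⟩ := ht
  refine ⟨M ++ N, List.pairwise_append.mpr ⟨hM, hN, fun p hp q hq => ?_⟩, ?_,
    (wt_append η M N).symm⟩
  · exact compat_of_r_le_l ((hmemM p hp).1.2.trans (hmemN q hq).1.1)
      ((hmemM p hp).2.2.trans (hmemN q hq).2.1)
  · intro p hp
    rcases List.mem_append.mp hp with hp | hp
    · obtain ⟨⟨h₁, h₂⟩, h₃, h₄⟩ := hmemM p hp
      exact ⟨⟨h₁, h₂.trans hz.2⟩, h₃, h₄.trans hz'.2⟩
    · obtain ⟨⟨h₁, h₂⟩, h₃, h₄⟩ := hmemN p hp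
      exact ⟨⟨hz.1.trans h₁, h₂⟩, hz'.1.trans h₃, h₄⟩

lemma exists_mem_simSetP_add_add {M : List (Fin n × Fin n')} (hM : IsMapping F F' M)
    {P₁ P₂ P₃ : Fin n → Prop} {P₁' P₂' P₃' : Fin n' → Prop}
    (h : ∀ p ∈ M, (P₁ p.1 ∧ P₁' p.2) ∨ (P₂ p.1 ∧ P₂' p.2) ∨ (P₃ p.1 ∧ P₃' p.2)) :
    ∃ s₁ ∈ simSetP F F' η P₁ P₁', ∃ s₂ ∈ simSetP F F' η P₂ P₂',
      ∃ s₃ ∈ simSetP F F' η P₃ P₃', wt η M = s₁ + s₂ + s₃ := by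
  classical
  set R : List (Fin n × Fin n') := M.filter fun p => ¬ (P₁ p.1 ∧ P₁' p.2)
  have hR : R.Sublist M := List.filter_sublist
  refine ⟨_, ⟨M.filter fun p => P₁ p.1 ∧ P₁' p.2, hM.sublist List.filter_sublist,
      fun p hp => ?_, rfl⟩,
    _, ⟨R.filter fun p => P₂ p.1 ∧ P₂' p.2, hM.sublist (List.filter_sublist.trans hR),
      fun p hp => ?_, rfl⟩,
    _, ⟨R.filter fun p => ¬ (P₂ p.1 ∧ P₂' p.2), hM.sublist (List.filter_sublist.trans hR),
      fun p hp => ?_, rfl⟩, ?_⟩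
  · simpa using (List.mem_filter.mp hp).2
  · simpa using (List.mem_filter.mp hp).2
  · obtain ⟨hpR, hp₂⟩ := List.mem_filter.mp hp
    obtain ⟨hpM, hp₁⟩ := List.mem_filter.mp hpR
    simp only [decide_eq_true_eq] at hp₁ hp₂
    simpa [hp₁, hp₂] using h p hpM
  · rw [add_assoc, wt_filter_add_wt_filter_not, wt_filter_add_wt_filter_not]

end SimSet

section Dichotomy

variable {F : BiForest n} {F' : BiForest n'} {η : Fin n → Fin n' → ℤ} {x y x' y' : ℕ}
  {M : List (Fin n × Fin n')}

lemma exists_outermost_properAnc {v : Fin n} (h : ∃ p ∈ M, ProperAnc F p.1 v) :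
    ∃ q ∈ M, ProperAnc F q.1 v ∧ ∀ p ∈ M, ¬ ProperAnc F p.1 q.1 := by
  obtain ⟨q, ⟨hqM, hqv⟩, hmax⟩ := Set.exists_max_image {p | p ∈ M ∧ ProperAnc F p.1 v}
    (fun p => F.r p.1) (M.finite_toSet.subset fun _ hp => hp.1) (let ⟨p, hp, hpv⟩ := h; ⟨p, hp, hpv⟩)
  refine ⟨q, hqM, hqv, fun p hpM hpq => ?_⟩
  have := hmax p ⟨hpM, hpq.trans hqv⟩
  exact absurd hpq.2 (by omega)

lemma aligns_of_isGreatest (hM : IsMapping F F' M)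
    (hmem : ∀ p ∈ M, F.mem x y p.1 ∧ F'.mem x' y' p.2)
    (hopt : IsGreatest (simSet F F' η x y x' y') (wt η M)) {u : Fin n} {u' : Fin n'}
    (hu : (u, u') ∈ M) (hanc : ∀ p ∈ M, ¬ ProperAnc F p.1 u) :
    Aligns F F' η x y x' y' u u' := by
  obtain ⟨S₁, hS₁⟩ := exists_isGreatest_simSetP F F' η (F.mem x (F.l u)) (F'.mem x' (F'.l u'))
  obtain ⟨S₂, hS₂⟩ := exists_isGreatest_simSetP F F' η
    (F.mem (F.l u) (F.r u)) (F'.mem (F'.l u') (F'.r u'))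
  obtain ⟨S₃, hS₃⟩ := exists_isGreatest_simSetP F F' η (F.mem (F.r u) y) (F'.mem (F'.r u') y')
  have hsplit : ∀ p ∈ M,
      (F.mem x (F.l u) p.1 ∧ F'.mem x' (F'.l u') p.2) ∨
      (F.mem (F.l u) (F.r u) p.1 ∧ F'.mem (F'.l u') (F'.r u') p.2) ∨
      (F.mem (F.r u) y p.1 ∧ F'.mem (F'.r u') y' p.2) := by
    intro p hp
    obtain ⟨⟨h₁, h₂⟩, h₁', h₂'⟩ := hmem p hp
    obtain rfl | hne := eq_or_ne p (u, u')
    · exact Or.inr (Or.inl ⟨⟨le_rfl, le_rfl⟩, le_rfl, le_rfl⟩)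
    rcases (hM.compat hp hu hne).left_or_inside_or_right (hanc p hp) with
      ⟨hl, hl'⟩ | hin | ⟨hr, hr'⟩
    · exact Or.inl ⟨⟨h₁, hl⟩, h₁', hl'⟩
    · exact Or.inr (Or.inl hin)
    · exact Or.inr (Or.inr ⟨⟨hr, h₂⟩, hr', h₂'⟩)
  obtain ⟨s₁, hs₁, s₂, hs₂, s₃, hs₃, hwt⟩ := exists_mem_simSetP_add_add (η := η) hM hsplit
  have hle : wt η M ≤ S₁ + S₂ + S₃ := by
    have := hS₁.2 hs₁; have := hS₂.2 hs₂; have := hS₃.2 hs₃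
    omega
  obtain ⟨⟨hxu, huy⟩, hxu', huy'⟩ : F.mem x y u ∧ F'.mem x' y' u' := hmem _ hu
  have hu₁ := F.l_lt_r u
  have hu₂ := F'.l_lt_r u'
  have hge : S₁ + S₂ + S₃ ≤ wt η M :=
    hopt.2 (add_mem_simSet ⟨by omega, huy⟩ ⟨by omega, huy'⟩
      (add_mem_simSet ⟨hxu, hu₁.le⟩ ⟨hxu', hu₂.le⟩ hS₁.1 hS₂.1) hS₃.1)
  exact ⟨_, S₁, S₂, S₃, hopt, hS₁, hS₂, hS₃, le_antisymm hle hge⟩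

lemma isGreatest_simSetP_remove_of_not_properAnc {v : Fin n} (hv : x ≤ F.l v ∧ F.r v ≤ y)
    (hM : IsMapping F F' M) (hmem : ∀ p ∈ M, F.mem x y p.1 ∧ F'.mem x' y' p.2)
    (hopt : IsGreatest (simSet F F' η x y x' y') (wt η M))
    (hanc : ∀ p ∈ M, ¬ ProperAnc F p.1 v) :
    IsGreatest (simSetP F F' η (fun w => F.mem x (F.l v) w ∨ F.mem (F.l v) y w)
      (F'.mem x' y')) (wt η M) := by
  have hsub : ∀ w, F.mem x (F.l v) w ∨ F.mem (F.l v) y w → F.mem x y w := by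
    have := F.l_lt_r v
    rintro w (⟨h₁, h₂⟩ | ⟨h₁, h₂⟩)
    · exact ⟨h₁, by omega⟩
    · exact ⟨by omega, h₂⟩
  refine ⟨⟨M, hM, fun p hp => ?_, rfl⟩,
    upperBounds_mono_set (simSetP_mono hsub fun _ => id) hopt.2⟩
  exact ⟨F.mem_left_or_mem_right_of_not_properAnc (hmem p hp).1 (hanc p hp), (hmem p hp).2⟩

end Dichotomy

/-- align-or-remove dichotomy: let `v ∈ F` and let `P` be the
set of proper ancestors of `v` (nodes strictly between the virtual root and
`v`). For all subforests `F[x..y)`, `F'[x'..y')` with `sub(v) ⊆ F[x..y)`,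
either (a) some `u ∈ P` has `sub(u)` aligned by the similarity to a subtree of
`F'[x'..y')`, or (b)
`sim(F[x..y), F'[x'..y')) = sim(F[x..l(v)) + F[l(v)..y), F'[x'..y'))`. -/
theorem stmt10 (F : BiForest n) (F' : BiForest n') (η : Fin n → Fin n' → ℤ)
    (v : Fin n) (x y x' y' : ℕ)
    (hsub : x ≤ F.l v ∧ F.r v ≤ y) :
    (∃ u : Fin n, ProperAnc F u v ∧ F.mem x y u ∧
        ∃ u' : Fin n', F'.mem x' y' u' ∧ Aligns F F' η x y x' y' u u') ∨
    (∃ S : ℤ,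
        IsGreatest (simSet F F' η x y x' y') S ∧
        IsGreatest (simSetP F F' η
          (fun w => F.mem x (F.l v) w ∨ F.mem (F.l v) y w)
          (F'.mem x' y')) S) := by
  obtain ⟨S, hS⟩ := exists_isGreatest_simSetP F F' η (F.mem x y) (F'.mem x' y')
  obtain ⟨M, hM, hmem, rfl⟩ := hS.1
  by_cases hP : ∃ p ∈ M, ProperAnc F p.1 v
  · obtain ⟨q, hqM, hqv, hq⟩ := exists_outermost_properAnc hP
    exact Or.inl ⟨q.1, hqv, (hmem q hqM).1, q.2, (hmem q hqM).2,
      aligns_of_isGreatest hM hmem hS hqM hq⟩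
  · push Not at hP
    exact Or.inr ⟨_, hS, isGreatest_simSetP_remove_of_not_properAnc hsub hM hmem hS hP⟩

end Stmt10
end

section
/- Balanced spine existence (heavy-path style): every nonempty ordered forest F contains a spine S ending at a leaf v such that both the set of nodes strictly to the left of the spine, F[0..l(v)), and the set strictly to the right, F[r(v)..2|F|+1), have size at most |F|/2. -/
namespace Stmt13

/-- An ordered forest on node set `Fin n`, encoded by its bi-order traversal:
`l v` is the (1-based) position of the first occurrence of `v`, and `r v` is
one plus the position of the second occurrence. The positions `1, …, 2n` are
occupied by exactly one occurrence each, and occurrence intervals are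
well-nested. -/
structure BiForest (n : ℕ) where
  l : Fin n → ℕ
  r : Fin n → ℕ
  one_le_l : ∀ v, 1 ≤ l v
  l_add_two_le_r : ∀ v, l v + 2 ≤ r v
  r_le : ∀ v, r v ≤ 2 * n + 1
  occ_inj : Function.Injective
    (Sum.elim (fun v => l v) (fun v => r v - 1) : Fin n ⊕ Fin n → ℕ)
  nested : ∀ u v : Fin n,
    r u ≤ l v ∨ r v ≤ l u ∨ (l u ≤ l v ∧ r v ≤ r u) ∨ (l v ≤ l u ∧ r u ≤ r v)

variable {n n' : ℕ}

/-- Membership of a node `v` in the subforest `F[x..y)`: both bi-order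
occurrences of `v` lie in positions `x, …, y-1`. -/
def BiForest.mem (F : BiForest n) (x y : ℕ) (v : Fin n) : Prop :=
  x ≤ F.l v ∧ F.r v ≤ y

/-- Two matched pairs are compatible if they consist of distinct nodes and
preserve the ancestor relations and the left-to-right (pre-order) order in
both directions; equivalently, the `l`-order and the `r`-order are preserved. -/
def Compat (F : BiForest n) (F' : BiForest n') (p q : Fin n × Fin n') : Prop :=
  p.1 ≠ q.1 ∧ p.2 ≠ q.2 ∧
  (F.l p.1 < F.l q.1 ↔ F'.l p.2 < F'.l q.2) ∧
  (F.r p.1 < F.r q.1 ↔ F'.r p.2 < F'.r q.2)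

/-- A valid similarity mapping between `F` and `F'`. -/
def IsMapping (F : BiForest n) (F' : BiForest n') (M : List (Fin n × Fin n')) : Prop :=
  M.Pairwise (Compat F F')

/-- Total weight of a mapping under the weight function `η`. -/
def wt (η : Fin n → Fin n' → ℤ) (M : List (Fin n × Fin n')) : ℤ :=
  (M.map (fun p => η p.1 p.2)).sum

/-- The set of achievable mapping weights, where matched nodes are restricted
by the predicates `P` (on `F`) and `P'` (on `F'`); its greatest element is the
similarity of the corresponding subforests. -/
def simSetP (F : BiForest n) (F' : BiForest n') (η : Fin n → Fin n' → ℤ)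
    (P : Fin n → Prop) (P' : Fin n' → Prop) : Set ℤ :=
  {s | ∃ M, IsMapping F F' M ∧ (∀ p ∈ M, P p.1 ∧ P' p.2) ∧ s = wt η M}

/-- The set of achievable mapping weights between the subforests `F[x..y)` and
`F'[x'..y')`; its greatest element is `sim(F[x..y), F'[x'..y'))`. -/
def simSet (F : BiForest n) (F' : BiForest n') (η : Fin n → Fin n' → ℤ)
    (x y x' y' : ℕ) : Set ℤ :=
  simSetP F F' η (F.mem x y) (F'.mem x' y')

/-- `u` is a proper ancestor of `v`. -/
def ProperAnc (F : BiForest n) (u v : Fin n) : Prop :=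
  F.l u < F.l v ∧ F.r v < F.r u

/-- `v` is a root of one of the trees of the forest. -/
def IsRoot (F : BiForest n) (v : Fin n) : Prop :=
  ∀ u, ¬ ProperAnc F u v

/-- `v` is a leaf. -/
def IsLeaf (F : BiForest n) (v : Fin n) : Prop :=
  ∀ u, ¬ ProperAnc F v u

/-- `c` is a child of `p`. -/
def IsChild (F : BiForest n) (p c : Fin n) : Prop :=
  ProperAnc F p c ∧ ¬ ∃ w, ProperAnc F p w ∧ ProperAnc F w c

/-!
Among the leaves whose left part has at most `n / 2` nodes (the leaf with the smallest `r` has an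
empty one), take the rightmost leaf `v`. Were its right part larger, the node of that right part
with the smallest `r` would be a leaf further right whose left part is disjoint from the right
part of `v`, hence also at most `n / 2`, contradicting the choice of `v`. The spine down to `v`
is built by repeatedly passing to the parent, the proper ancestor with the largest `l`.
-/

namespace BiForest

variable (F : BiForest n)

/-- `F.leftOf v` and `F.rightOf v` are the subforests `F[0..l(v))` and `F[r(v)..2n+1)`. -/
def leftOf (v : Fin n) : Set (Fin n) := {u | F.r u ≤ F.l v}

def rightOf (v : Fin n) : Set (Fin n) := {u | F.r v ≤ F.l u}

lemma l_lt_r (v : Fin n) : F.l v < F.r v := by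
  have := F.l_add_two_le_r v
  omega

end BiForest

lemma isLeaf_of_forall_r_le {F : BiForest n} {c : ℕ} {w : Fin n} (hc : c ≤ F.l w)
    (hmin : ∀ u, c ≤ F.l u → F.r w ≤ F.r u) : IsLeaf F w := fun u hu =>
  (hmin u (hc.trans hu.1.le)).not_gt hu.2

lemma exists_isChild_of_not_isRoot {F : BiForest n} {v : Fin n} (hv : ¬ IsRoot F v) :
    ∃ p, IsChild F p v := by
  obtain ⟨p, hp, hmax⟩ := Set.exists_max_image {u | ProperAnc F u v} F.l (Set.toFinite _)
    (by simpa [IsRoot, Set.Nonempty] using hv)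
  exact ⟨p, hp, fun ⟨w, hpw, hwv⟩ => (hmax w hwv).not_gt hpw.1⟩

lemma exists_spine_ending_at (F : BiForest n) (v : Fin n) :
    ∃ (m : ℕ) (s : ℕ → Fin n), 0 < m ∧ IsRoot F (s 0) ∧
      (∀ i, i + 1 < m → IsChild F (s i) (s (i + 1))) ∧ s (m - 1) = v := by
  induction hk : F.l v using Nat.strong_induction_on generalizing v with
  | _ k ih =>
    by_cases hroot : IsRoot F v
    · exact ⟨1, fun _ => v, one_pos, hroot, by omega, rfl⟩
    obtain ⟨p, hpv⟩ := exists_isChild_of_not_isRoot hroot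
    obtain ⟨m, s, hm, hs0, hchild, hlast⟩ := ih _ (hk ▸ hpv.1.1) p rfl
    refine ⟨m + 1, fun i => if i < m then s i else v, by omega, by simpa [hm] using hs0, ?_,
      by simp⟩
    intro i hi
    by_cases him : i + 1 < m
    · simpa [him, show i < m by omega] using hchild i him
    · obtain rfl : i = m - 1 := by omega
      simpa [Nat.sub_add_cancel hm, show m - 1 < m by omega, hlast] using hpv

lemma exists_isLeaf_leftOf_eq_empty (hn : 0 < n) (F : BiForest n) :
    ∃ v, IsLeaf F v ∧ F.leftOf v = ∅ := by
  obtain ⟨v, -, hmin⟩ := Finset.exists_min_image Finset.univ F.r ⟨⟨0, hn⟩, Finset.mem_univ _⟩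
  refine ⟨v, isLeaf_of_forall_r_le (Nat.zero_le _) fun u _ => hmin u (Finset.mem_univ u), ?_⟩
  refine Set.eq_empty_of_forall_notMem fun u (hu : F.r u ≤ F.l v) => ?_
  have := hmin u (Finset.mem_univ u)
  have := F.l_lt_r v
  omega

lemma exists_isLeaf_rightOf {F : BiForest n} {v : Fin n} (hR : (F.rightOf v).Nonempty) :
    ∃ w, IsLeaf F w ∧ F.r v ≤ F.l w ∧ (F.leftOf w).ncard + (F.rightOf v).ncard ≤ n := by
  obtain ⟨w, hw, hmin⟩ := Set.exists_min_image _ F.r (Set.toFinite _) hR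
  have hleaf : IsLeaf F w := isLeaf_of_forall_r_le hw hmin
  have hdisj : Disjoint (F.leftOf w) (F.rightOf v) := by
    refine Set.disjoint_left.2 fun u (hu : F.r u ≤ F.l w) hu' => ?_
    have := hmin u hu'
    have := F.l_lt_r w
    omega
  refine ⟨w, hleaf, hw, ?_⟩
  rw [← Set.ncard_union_eq hdisj]
  simpa using Set.ncard_le_card (F.leftOf w ∪ F.rightOf v)

lemma exists_balanced_leaf (hn : 0 < n) (F : BiForest n) :
    ∃ v, IsLeaf F v ∧ 2 * (F.leftOf v).ncard ≤ n ∧ 2 * (F.rightOf v).ncard ≤ n := by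
  obtain ⟨v₀, hv₀, hleft₀⟩ := exists_isLeaf_leftOf_eq_empty hn F
  obtain ⟨v, ⟨hv, hleft⟩, hmax⟩ := Set.exists_max_image
    {x | IsLeaf F x ∧ 2 * (F.leftOf x).ncard ≤ n} F.l (Set.toFinite _)
    ⟨v₀, hv₀, by simp [hleft₀]⟩
  refine ⟨v, hv, hleft, ?_⟩
  by_contra! hright
  have hR : (F.rightOf v).Nonempty := Set.nonempty_of_ncard_ne_zero (by omega)
  obtain ⟨w, hw, hvw, hcard⟩ := exists_isLeaf_rightOf hR
  have := hmax w ⟨hw, by omega⟩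
  have := F.l_lt_r v
  omega

/-- balanced spine existence: every nonempty ordered forest `F`
contains a spine (a root-to-leaf path `s₀, …, s_{m-1}` of consecutive
parent-child nodes) ending at a leaf `v = s_{m-1}` such that both the set of
nodes strictly to the left of the spine, `F[0..l(v))`, and the set strictly to
the right, `F[r(v)..2|F|+1)`, have size at most `|F|/2`. -/
theorem stmt13 (hn : 0 < n) (F : BiForest n) :
    ∃ (m : ℕ) (s : ℕ → Fin n), 0 < m ∧
      IsRoot F (s 0) ∧
      (∀ i, i + 1 < m → IsChild F (s i) (s (i + 1))) ∧
      IsLeaf F (s (m - 1)) ∧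
      2 * {u : Fin n | F.r u ≤ F.l (s (m - 1))}.ncard ≤ n ∧
      2 * {u : Fin n | F.r (s (m - 1)) ≤ F.l u}.ncard ≤ n := by
  obtain ⟨v, hv, hleft, hright⟩ := exists_balanced_leaf hn F
  obtain ⟨m, s, hm, hroot, hchild, rfl⟩ := exists_spine_ending_at F v
  exact ⟨m, s, hm, hroot, hchild, hv, hleft, hright⟩

end Stmt13
end

section
/- Longest paths in the alignment graph compute similarity: for forests F, F' and the alignment graph Ḡ with respect to (w_{F,F'}, F, F') where w_{F,F'}(i,i') = sim(sub(v_i), sub(v_{i'}')), the maximum-weight path in Ḡ from vertex (i,i') to vertex (j,j') equals sim(F[l(v_i)..l(v_j)), F'[l(v_{i'}')..l(v_{j'}'))), for all i ≤ j and i' ≤ j' (with the convention l(v_{|F|+1}) = 2|F|+1). -/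
/-!
A path from `(i, i')` to `(j, j')` yields a mapping between `F[L i..L j)` and
`F'[L' i'..L' j')` of the same weight: a diagonal edge at `(k, k')` contributes an optimal
mapping between `sub(v k)` and `sub(v' k')`, and since `r (v k) ≤ L (π k)` these pieces live in
consecutive blocks and are compatible with each other. Conversely, a mapping splits at its
leftmost pair `(v k, v' k')` into the pairs below it, of total weight at most `W k k'`, and the
pairs to the right of both subtrees, which lie in `F[L (π k)..) × F'[L' (π' k')..)`. Walking to
`(k, k')`, taking the diagonal edge and recursing on the rest gives a path of at least the
mapping's weight.
-/

namespace Stmt15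

/-- An ordered forest on node set `Fin n`, encoded by its bi-order traversal:
`l v` is the (1-based) position of the first occurrence of `v`, and `r v` is
one plus the position of the second occurrence. The positions `1, …, 2n` are
occupied by exactly one occurrence each, and occurrence intervals are
well-nested. -/
structure BiForest (n : ℕ) where
  l : Fin n → ℕ
  r : Fin n → ℕ
  one_le_l : ∀ v, 1 ≤ l v
  l_add_two_le_r : ∀ v, l v + 2 ≤ r v
  r_le : ∀ v, r v ≤ 2 * n + 1
  occ_inj : Function.Injective
    (Sum.elim (fun v => l v) (fun v => r v - 1) : Fin n ⊕ Fin n → ℕ)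
  nested : ∀ u v : Fin n,
    r u ≤ l v ∨ r v ≤ l u ∨ (l u ≤ l v ∧ r v ≤ r u) ∨ (l v ≤ l u ∧ r u ≤ r v)

variable {n n' : ℕ}

/-- Membership of a node `v` in the subforest `F[x..y)`: both bi-order
occurrences of `v` lie in positions `x, …, y-1`. -/
def BiForest.mem (F : BiForest n) (x y : ℕ) (v : Fin n) : Prop :=
  x ≤ F.l v ∧ F.r v ≤ y

/-- Two matched pairs are compatible if they consist of distinct nodes and
preserve the ancestor relations and the left-to-right (pre-order) order in
both directions; equivalently, the `l`-order and the `r`-order are preserved. -/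
def Compat (F : BiForest n) (F' : BiForest n') (p q : Fin n × Fin n') : Prop :=
  p.1 ≠ q.1 ∧ p.2 ≠ q.2 ∧
  (F.l p.1 < F.l q.1 ↔ F'.l p.2 < F'.l q.2) ∧
  (F.r p.1 < F.r q.1 ↔ F'.r p.2 < F'.r q.2)

/-- A valid similarity mapping between `F` and `F'`. -/
def IsMapping (F : BiForest n) (F' : BiForest n') (M : List (Fin n × Fin n')) : Prop :=
  M.Pairwise (Compat F F')

/-- Total weight of a mapping under the weight function `η`. -/
def wt (η : Fin n → Fin n' → ℤ) (M : List (Fin n × Fin n')) : ℤ :=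
  (M.map (fun p => η p.1 p.2)).sum

/-- The set of achievable mapping weights, where matched nodes are restricted
by the predicates `P` (on `F`) and `P'` (on `F'`); its greatest element is the
similarity of the corresponding subforests. -/
def simSetP (F : BiForest n) (F' : BiForest n') (η : Fin n → Fin n' → ℤ)
    (P : Fin n → Prop) (P' : Fin n' → Prop) : Set ℤ :=
  {s | ∃ M, IsMapping F F' M ∧ (∀ p ∈ M, P p.1 ∧ P' p.2) ∧ s = wt η M}

/-- The set of achievable mapping weights between the subforests `F[x..y)` and
`F'[x'..y')`; its greatest element is `sim(F[x..y), F'[x'..y'))`. -/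
def simSet (F : BiForest n) (F' : BiForest n') (η : Fin n → Fin n' → ℤ)
    (x y x' y' : ℕ) : Set ℤ :=
  simSetP F F' η (F.mem x y) (F'.mem x' y')

/-- A single weighted edge of the alignment graph on `[1,n+1] × [1,n'+1]`:
right and up edges of weight `0`, and diagonal edges `(i,i') → (π i, π' i')`
of weight `W i i' = sim(sub(vᵢ), sub(v'_{i'}))`. -/
def Step (n n' : ℕ) (π π' : ℕ → ℕ) (W : ℕ → ℕ → ℤ) (p q : ℕ × ℕ) (c : ℤ) : Prop :=
  1 ≤ p.1 ∧ p.1 ≤ n + 1 ∧ 1 ≤ p.2 ∧ p.2 ≤ n' + 1 ∧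
  1 ≤ q.1 ∧ q.1 ≤ n + 1 ∧ 1 ≤ q.2 ∧ q.2 ≤ n' + 1 ∧
  ((q = (p.1 + 1, p.2) ∧ c = 0) ∨ (q = (p.1, p.2 + 1) ∧ c = 0) ∨
    (p.1 ≤ n ∧ p.2 ≤ n' ∧ q = (π p.1, π' p.2) ∧ c = W p.1 p.2))

/-- `PathW step p q c`: there is a directed path from `p` to `q` of total
weight `c`. -/
inductive PathW (step : ℕ × ℕ → ℕ × ℕ → ℤ → Prop) : ℕ × ℕ → ℕ × ℕ → ℤ → Prop where
  | refl (p : ℕ × ℕ) : PathW step p p 0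
  | tail {p q r : ℕ × ℕ} {c d : ℤ} :
      PathW step p q c → step q r d → PathW step p r (c + d)

namespace BiForest

variable (F : BiForest n)

theorem l_injective : Function.Injective F.l :=
  fun _ _ h => Sum.inl_injective (F.occ_inj h)

theorem r_injective : Function.Injective F.r :=
  fun _ _ h => Sum.inr_injective (F.occ_inj (congrArg (· - 1) h : F.r _ - 1 = F.r _ - 1))

theorem l_lt_r (u : Fin n) : F.l u < F.r u := by
  have := F.l_add_two_le_r u
  omega

variable {F}

theorem r_le_l_of_l_lt_of_r_lt {u w : Fin n} (hl : F.l u < F.l w) (hr : F.r u < F.r w) :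
    F.r u ≤ F.l w := by
  have := F.l_lt_r w
  rcases F.nested u w with h | h | h | h <;> omega

end BiForest

section Mapping

variable {F : BiForest n} {F' : BiForest n'}

theorem Compat.symm {p q : Fin n × Fin n'} (h : Compat F F' p q) : Compat F F' q p := by
  obtain ⟨h₁, h₂, hl, hr⟩ := h
  have := F.l_injective.ne h₁
  have := F'.l_injective.ne h₂
  have := F.r_injective.ne h₁
  have := F'.r_injective.ne h₂
  exact ⟨h₁.symm, h₂.symm, by omega, by omega⟩

theorem Compat.mem_of_r_lt {p q : Fin n × Fin n'} (h : Compat F F' p q)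
    (hl : F.l p.1 ≤ F.l q.1) (hr : F.r q.1 < F.r p.1) :
    F.mem (F.l p.1) (F.r p.1) q.1 ∧ F'.mem (F'.l p.2) (F'.r p.2) q.2 := by
  obtain ⟨h₁, h₂, hl', hr'⟩ := h
  have := F.l_injective.ne h₁
  have := F'.r_injective.ne h₂
  exact ⟨⟨hl, hr.le⟩, ⟨by omega, by omega⟩⟩

theorem Compat.r_le_l_of_not_r_lt {p q : Fin n × Fin n'} (h : Compat F F' p q)
    (hl : F.l p.1 ≤ F.l q.1) (hr : ¬ F.r q.1 < F.r p.1) :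
    F.r p.1 ≤ F.l q.1 ∧ F'.r p.2 ≤ F'.l q.2 := by
  obtain ⟨h₁, h₂, hl', hr'⟩ := h
  have := F.l_injective.ne h₁
  have := F.r_injective.ne h₁
  exact ⟨BiForest.r_le_l_of_l_lt_of_r_lt (by omega) (by omega),
    BiForest.r_le_l_of_l_lt_of_r_lt (by omega) (by omega)⟩

theorem IsMapping.perm {M N : List (Fin n × Fin n')} (hM : IsMapping F F' M) (h : M.Perm N) :
    IsMapping F F' N :=
  h.pairwise hM Compat.symm

theorem wt_append (η : Fin n → Fin n' → ℤ) (M N : List (Fin n × Fin n')) :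
    wt η (M ++ N) = wt η M + wt η N := by
  simp [wt]

theorem wt_cons (η : Fin n → Fin n' → ℤ) (p : Fin n × Fin n') (M : List (Fin n × Fin n')) :
    wt η (p :: M) = η p.1 p.2 + wt η M := by
  simp [wt]

theorem wt_perm (η : Fin n → Fin n' → ℤ) {M N : List (Fin n × Fin n')} (h : M.Perm N) :
    wt η M = wt η N :=
  (h.map _).sum_eq

/-- `p` is a leftmost pair of `M`, so every other pair is below it or to the right of it. -/
theorem IsMapping.exists_split (η : Fin n → Fin n' → ℤ) {M : List (Fin n × Fin n')}
    (hM : IsMapping F F' M) (hne : M ≠ []) :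
    ∃ p ∈ M, ∃ below right : List (Fin n × Fin n'),
      IsMapping F F' (p :: below) ∧ IsMapping F F' right ∧ right.length < M.length ∧
      (∀ q ∈ p :: below, F.mem (F.l p.1) (F.r p.1) q.1 ∧ F'.mem (F'.l p.2) (F'.r p.2) q.2) ∧
      (∀ q ∈ right, q ∈ M ∧ F.r p.1 ≤ F.l q.1 ∧ F'.r p.2 ≤ F'.l q.2) ∧
      wt η M = wt η (p :: below) + wt η right := by
  obtain ⟨p, hpM, hmin⟩ := M.toFinset.exists_min_image (fun q => F.l q.1)
    (List.toFinset_nonempty_iff M |>.mpr hne)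
  rw [List.mem_toFinset] at hpM
  set rest := M.erase p
  have hperm : M.Perm (p :: rest) := List.perm_cons_erase hpM
  have hrest : IsMapping F F' (p :: rest) := hM.perm hperm
  have hcompat : ∀ q ∈ rest, Compat F F' p q ∧ F.l p.1 ≤ F.l q.1 := fun q hq =>
    ⟨List.rel_of_pairwise_cons hrest hq,
      hmin q (List.mem_toFinset.mpr (List.mem_of_mem_erase hq))⟩
  let isBelow : Fin n × Fin n' → Bool := fun q => decide (F.r q.1 < F.r p.1)
  refine ⟨p, hpM, rest.filter isBelow, rest.filter (fun q => !isBelow q),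
    hrest.sublist (List.filter_sublist.cons_cons p), hrest.of_cons.sublist List.filter_sublist,
    ?_, ?_, ?_, ?_⟩
  · have : rest.length = M.length - 1 := List.length_erase_of_mem hpM
    have := List.length_filter_le (fun q => !isBelow q) rest
    have := List.length_pos_of_ne_nil hne
    omega
  · rintro q (_ | ⟨_, hq⟩)
    · exact ⟨⟨le_rfl, le_rfl⟩, ⟨le_rfl, le_rfl⟩⟩
    · obtain ⟨hq, hr⟩ := List.mem_filter.mp hq
      exact (hcompat q hq).1.mem_of_r_lt (hcompat q hq).2 (by simpa [isBelow] using hr)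
  · intro q hq
    obtain ⟨hq, hr⟩ := List.mem_filter.mp hq
    exact ⟨List.mem_of_mem_erase hq,
      (hcompat q hq).1.r_le_l_of_not_r_lt (hcompat q hq).2 (by simpa [isBelow] using hr)⟩
  · rw [wt_perm η hperm, wt_cons, wt_cons, ← wt_perm η (List.filter_append_perm isBelow rest),
      wt_append, add_assoc]

end Mapping

section SimSet

variable {F : BiForest n} {F' : BiForest n'} {η : Fin n → Fin n' → ℤ}

theorem zero_mem_simSet {x y x' y' : ℕ} : 0 ∈ simSet F F' η x y x' y' :=
  ⟨[], List.Pairwise.nil, by simp, by simp [wt]⟩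

theorem simSet_mono {x₁ y₁ x₁' y₁' x₂ y₂ x₂' y₂' : ℕ} (hx : x₂ ≤ x₁) (hy : y₁ ≤ y₂)
    (hx' : x₂' ≤ x₁') (hy' : y₁' ≤ y₂') :
    simSet F F' η x₁ y₁ x₁' y₁' ⊆ simSet F F' η x₂ y₂ x₂' y₂' := by
  rintro s ⟨M, hM, hmem, rfl⟩
  refine ⟨M, hM, fun q hq => ?_, rfl⟩
  obtain ⟨⟨h₁, h₂⟩, ⟨h₁', h₂'⟩⟩ := hmem q hq
  exact ⟨⟨hx.trans h₁, h₂.trans hy⟩, ⟨hx'.trans h₁', h₂'.trans hy'⟩⟩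

/-- Every pair of the first block precedes every pair of the second one in both forests. -/
theorem add_mem_simSet {x y z x' y' z' : ℕ} {s t : ℤ} (hxy : x ≤ y) (hyz : y ≤ z)
    (hxy' : x' ≤ y') (hyz' : y' ≤ z') (hs : s ∈ simSet F F' η x y x' y')
    (ht : t ∈ simSet F F' η y z y' z') : s + t ∈ simSet F F' η x z x' z' := by
  obtain ⟨M, hM, hMmem, rfl⟩ := hs
  obtain ⟨N, hN, hNmem, rfl⟩ := ht
  have hcross : ∀ p ∈ M, ∀ q ∈ N, Compat F F' p q := by
    intro p hp q hq
    obtain ⟨⟨-, hp₁⟩, ⟨-, hp₂⟩⟩ := hMmem p hp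
    obtain ⟨⟨hq₁, -⟩, ⟨hq₂, -⟩⟩ := hNmem q hq
    have := F.l_lt_r p.1
    have := F.l_lt_r q.1
    have := F'.l_lt_r p.2
    have := F'.l_lt_r q.2
    refine ⟨fun h => ?_, fun h => ?_, by omega, by omega⟩
    · rw [h] at hp₁; omega
    · rw [h] at hp₂; omega
  refine ⟨M ++ N, List.pairwise_append.mpr ⟨hM, hN, hcross⟩, fun q hq => ?_, (wt_append η M N).symm⟩
  rcases List.mem_append.mp hq with hq | hq
  · obtain ⟨⟨h₁, h₂⟩, ⟨h₁', h₂'⟩⟩ := hMmem q hq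
    exact ⟨⟨h₁, h₂.trans hyz⟩, ⟨h₁', h₂'.trans hyz'⟩⟩
  · obtain ⟨⟨h₁, h₂⟩, ⟨h₁', h₂'⟩⟩ := hNmem q hq
    exact ⟨⟨hxy.trans h₁, h₂⟩, ⟨hxy'.trans h₁', h₂'⟩⟩

end SimSet

/-- `v` lists the nodes of `F` in pre-order at positions `1, …, n`, `π i` is the first position
after the subtree of `v i`, and `L i = l (v i)`, extended by `L (n + 1) = 2 n + 1`. -/
structure BiForest.IsPreorderIndexing (F : BiForest n) (v : ℕ → Fin n) (π L : ℕ → ℕ) : Prop where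
  mono : ∀ i j, 1 ≤ i → i < j → j ≤ n → F.l (v i) < F.l (v j)
  surj : ∀ u : Fin n, ∃ i, 1 ≤ i ∧ i ≤ n ∧ v i = u
  skip : ∀ i, 1 ≤ i → i ≤ n →
    i < π i ∧ π i ≤ n + 1 ∧
    (∀ j, i ≤ j → j < π i → j ≤ n → F.mem (F.l (v i)) (F.r (v i)) (v j)) ∧
    (π i ≤ n → ¬ F.mem (F.l (v i)) (F.r (v i)) (v (π i)))
  L_eq : ∀ i, 1 ≤ i → i ≤ n → L i = F.l (v i)
  L_last : L (n + 1) = 2 * n + 1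

namespace BiForest.IsPreorderIndexing

variable {F : BiForest n} {v : ℕ → Fin n} {π L : ℕ → ℕ} (hF : F.IsPreorderIndexing v π L)
include hF

theorem strictMonoOn_L : StrictMonoOn L (Set.Icc 1 (n + 1)) := by
  rintro a ⟨ha, -⟩ b ⟨-, hb⟩ hab
  rw [hF.L_eq a ha (by omega)]
  rcases Nat.lt_or_ge b (n + 1) with hb' | hb'
  · rw [hF.L_eq b (by omega) (by omega)]
    exact hF.mono a b ha hab (by omega)
  · rw [show b = n + 1 by omega, hF.L_last]
    have := F.r_le (v a)
    have := F.l_lt_r (v a)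
    omega

theorem L_le_L {a b : ℕ} (ha : 1 ≤ a) (hab : a ≤ b) (hb : b ≤ n + 1) : L a ≤ L b :=
  hF.strictMonoOn_L.monotoneOn ⟨ha, by omega⟩ ⟨by omega, hb⟩ hab

theorem le_of_L_le_l {a i : ℕ} (ha : 1 ≤ a) (ha' : a ≤ n + 1) (hi : 1 ≤ i) (hi' : i ≤ n)
    (h : L a ≤ F.l (v i)) : a ≤ i :=
  (hF.strictMonoOn_L.le_iff_le ⟨ha, ha'⟩ ⟨hi, by omega⟩).mp (h.trans_eq (hF.L_eq i hi hi').symm)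

theorem r_le_L_skip {i : ℕ} (hi : 1 ≤ i) (hi' : i ≤ n) : F.r (v i) ≤ L (π i) := by
  obtain ⟨hlt, hle, -, hout⟩ := hF.skip i hi hi'
  rcases Nat.lt_or_ge (π i) (n + 1) with h | h
  · rw [hF.L_eq _ (by omega) (by omega)]
    have := hF.mono i (π i) hi hlt (by omega)
    have := F.l_lt_r (v (π i))
    rcases F.nested (v i) (v (π i)) with c | c | c | c
    · exact c
    · omega
    · exact absurd c (hout (by omega))
    · omega
  · rw [show π i = n + 1 by omega, hF.L_last]
    exact F.r_le _

theorem L_skip_le_l {i : ℕ} (hi : 1 ≤ i) (hi' : i ≤ n) {u : Fin n} (h : F.r (v i) ≤ F.l u) :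
    L (π i) ≤ F.l u := by
  obtain ⟨j, hj, hj', rfl⟩ := hF.surj u
  obtain ⟨hlt, hle, hin, -⟩ := hF.skip i hi hi'
  have := F.l_lt_r (v i)
  have := F.l_lt_r (v j)
  have hij : i ≤ j := by
    by_contra! hji
    have := hF.mono j i hj hji hi'
    omega
  have hskip : π i ≤ j := by
    by_contra! hjπ
    have := (hin j hij hjπ hj').2
    omega
  exact (hF.L_le_L (by omega) hskip (by omega)).trans_eq (hF.L_eq j hj hj')

theorem skip_le_of_r_le_L {i b : ℕ} (hi : 1 ≤ i) (hi' : i ≤ n) (hb : 1 ≤ b) (hb' : b ≤ n + 1)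
    (h : F.r (v i) ≤ L b) : π i ≤ b := by
  obtain ⟨hlt, hle, -, -⟩ := hF.skip i hi hi'
  rcases Nat.lt_or_ge b (n + 1) with hbn | hbn
  · rw [hF.L_eq b hb (by omega)] at h
    have := (hF.L_skip_le_l hi hi' h).trans_eq (hF.L_eq b hb (by omega)).symm
    exact (hF.strictMonoOn_L.le_iff_le ⟨by omega, hle⟩ ⟨hb, hb'⟩).mp this
  · omega

end BiForest.IsPreorderIndexing

theorem PathW.trans {step : ℕ × ℕ → ℕ × ℕ → ℤ → Prop} {p q r : ℕ × ℕ} {c d : ℤ}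
    (h₁ : PathW step p q c) (h₂ : PathW step q r d) : PathW step p r (c + d) := by
  induction h₂ with
  | refl => simpa using h₁
  | tail _ hs ih => simpa only [add_assoc] using ih.tail hs

theorem PathW.le {step : ℕ × ℕ → ℕ × ℕ → ℤ → Prop} (hstep : ∀ p q c, step p q c → p ≤ q)
    {p q : ℕ × ℕ} {c : ℤ} (h : PathW step p q c) : p ≤ q := by
  induction h with
  | refl => exact le_rfl
  | tail _ hs ih => exact ih.trans (hstep _ _ _ hs)

section AlignmentGraph

variable {π π' : ℕ → ℕ} {W : ℕ → ℕ → ℤ}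

theorem Step.le (hπ : ∀ i, 1 ≤ i → i ≤ n → i ≤ π i) (hπ' : ∀ i, 1 ≤ i → i ≤ n' → i ≤ π' i)
    {p q : ℕ × ℕ} {c : ℤ} (h : Step n n' π π' W p q c) : p ≤ q := by
  obtain ⟨h₁, -, h₂, -, -, -, -, -, ⟨rfl, -⟩ | ⟨rfl, -⟩ | ⟨hn, hn', rfl, -⟩⟩ := h
  · exact Prod.mk_le_mk.mpr ⟨by omega, le_rfl⟩
  · exact Prod.mk_le_mk.mpr ⟨le_rfl, by omega⟩
  · exact Prod.mk_le_mk.mpr ⟨hπ _ h₁ hn, hπ' _ h₂ hn'⟩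

theorem pathW_zero {i j i' j' : ℕ} (hi : 1 ≤ i) (hij : i ≤ j) (hj : j ≤ n + 1)
    (hi' : 1 ≤ i') (hij' : i' ≤ j') (hj' : j' ≤ n' + 1) :
    PathW (Step n n' π π' W) (i, i') (j, j') 0 := by
  induction j, hij using Nat.le_induction with
  | base =>
    induction j', hij' using Nat.le_induction with
    | base => exact .refl _
    | succ k hk ih =>
      have hstep : Step n n' π π' W (i, k) (i, k + 1) 0 :=
        ⟨hi, hj, by omega, by omega, hi, hj, by omega, hj', .inr (.inl ⟨rfl, rfl⟩)⟩
      simpa using (ih (by omega)).tail hstep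
  | succ k hk ih =>
    have hstep : Step n n' π π' W (k, j') (k + 1, j') 0 :=
      ⟨by omega, by omega, by omega, hj', by omega, hj, by omega, hj', .inl ⟨rfl, rfl⟩⟩
    simpa using (ih (by omega)).tail hstep

variable {F : BiForest n} {F' : BiForest n'} {η : Fin n → Fin n' → ℤ}
  {v : ℕ → Fin n} {v' : ℕ → Fin n'} {L L' : ℕ → ℕ}
  (hF : F.IsPreorderIndexing v π L) (hF' : F'.IsPreorderIndexing v' π' L')
include hF hF'

theorem step_skip {i i' : ℕ} (hi : 1 ≤ i) (hin : i ≤ n) (hi' : 1 ≤ i') (hin' : i' ≤ n') :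
    Step n n' π π' W (i, i') (π i, π' i') (W i i') := by
  obtain ⟨hlt, hle, -⟩ := hF.skip i hi hin
  obtain ⟨hlt', hle', -⟩ := hF'.skip i' hi' hin'
  exact ⟨hi, by omega, hi', by omega, by omega, hle, by omega, hle',
    .inr (.inr ⟨hin, hin', rfl, rfl⟩)⟩

theorem mem_simSet_of_pathW
    (hW : ∀ i i', 1 ≤ i → i ≤ n → 1 ≤ i' → i' ≤ n' →
      W i i' ∈ simSet F F' η (F.l (v i)) (F.r (v i)) (F'.l (v' i')) (F'.r (v' i')))
    {p q : ℕ × ℕ} {c : ℤ} (h : PathW (Step n n' π π' W) p q c) (hp : 1 ≤ p.1) (hp' : 1 ≤ p.2) :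
    c ∈ simSet F F' η (L p.1) (L q.1) (L' p.2) (L' q.2) := by
  induction h with
  | refl => exact zero_mem_simSet
  | @tail q r c d hpq hstep ih =>
    have hle := Prod.le_def.mp <| hpq.le fun _ _ _ => Step.le
      (fun i hi hin => (hF.skip i hi hin).1.le) (fun i hi hin => (hF'.skip i hi hin).1.le)
    obtain ⟨hq, hqn, hq', hqn', -, hrn, -, hrn', hcase⟩ := hstep
    have hLpq := hF.L_le_L hp hle.1 hqn
    have hLpq' := hF'.L_le_L hp' hle.2 hqn'
    rcases hcase with ⟨rfl, rfl⟩ | ⟨rfl, rfl⟩ | ⟨hq_le, hq_le', rfl, rfl⟩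
    · rw [add_zero]
      exact simSet_mono le_rfl (hF.L_le_L hq (by omega) hrn) le_rfl le_rfl ih
    · rw [add_zero]
      exact simSet_mono le_rfl le_rfl le_rfl (hF'.L_le_L hq' (by omega) hrn') ih
    · have hskip := hF.r_le_L_skip hq hq_le
      have hskip' := hF'.r_le_L_skip hq' hq_le'
      have hsub := hW q.1 q.2 hq hq_le hq' hq_le'
      rw [← hF.L_eq _ hq hq_le, ← hF'.L_eq _ hq' hq_le'] at hsub
      exact add_mem_simSet hLpq (hF.L_le_L hq (hF.skip _ hq hq_le).1.le hrn) hLpq'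
        (hF'.L_le_L hq' (hF'.skip _ hq' hq_le').1.le hrn') ih
        (simSet_mono le_rfl hskip le_rfl hskip' hsub)

theorem exists_pathW_ge_wt
    (hW : ∀ i i', 1 ≤ i → i ≤ n → 1 ≤ i' → i' ≤ n' →
      W i i' ∈ upperBounds (simSet F F' η (F.l (v i)) (F.r (v i)) (F'.l (v' i')) (F'.r (v' i'))))
    {M : List (Fin n × Fin n')} (hM : IsMapping F F' M) {a b a' b' : ℕ}
    (ha : 1 ≤ a) (hab : a ≤ b) (hb : b ≤ n + 1) (ha' : 1 ≤ a') (hab' : a' ≤ b') (hb' : b' ≤ n' + 1)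
    (hmem : ∀ q ∈ M, F.mem (L a) (L b) q.1 ∧ F'.mem (L' a') (L' b') q.2) :
    ∃ c, PathW (Step n n' π π' W) (a, a') (b, b') c ∧ wt η M ≤ c := by
  induction hlen : M.length using Nat.strong_induction_on generalizing M a a' with
  | _ k ih =>
  rcases eq_or_ne M [] with rfl | hne
  · exact ⟨0, pathW_zero ha hab hb ha' hab' hb', le_of_eq rfl⟩
  obtain ⟨⟨u, u'⟩, hpM, below, right, hbelow, hright, hlen', hbelow_mem, hright_mem, hwt⟩ :=
    hM.exists_split η hne
  obtain ⟨i, hi, hin, rfl⟩ := hF.surj u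
  obtain ⟨i', hi', hin', rfl⟩ := hF'.surj u'
  obtain ⟨⟨hai, hib⟩, ⟨hai', hib'⟩⟩ := hmem _ hpM
  have hskip := hF.skip_le_of_r_le_L hi hin (by omega) hb hib
  have hskip' := hF'.skip_le_of_r_le_L hi' hin' (by omega) hb' hib'
  have hWle : wt η ((v i, v' i') :: below) ≤ W i i' :=
    hW i i' hi hin hi' hin' ⟨_, hbelow, hbelow_mem, rfl⟩
  obtain ⟨c, hc, hcle⟩ := ih right.length (hlen ▸ hlen') hright
    (by have := (hF.skip i hi hin).1; omega) hskip
    (by have := (hF'.skip i' hi' hin').1; omega) hskip'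
    (fun q hq => by
      obtain ⟨hqM, hq, hq'⟩ := hright_mem q hq
      exact ⟨⟨hF.L_skip_le_l hi hin hq, (hmem q hqM).1.2⟩,
        ⟨hF'.L_skip_le_l hi' hin' hq', (hmem q hqM).2.2⟩⟩) rfl
  have hpath := (pathW_zero ha (hF.le_of_L_le_l ha (by omega) hi hin hai) (by omega) ha'
    (hF'.le_of_L_le_l ha' (by omega) hi' hin' hai') (by omega)).tail
    (step_skip hF hF' hi hin hi' hin') |>.trans hc
  exact ⟨_, hpath, by omega⟩

end AlignmentGraph

/-- longest paths in the alignment graph compute similarity.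
Let `v : [1,n] → F` enumerate the nodes of `F` in pre-order (strictly
increasing `l`-values) and similarly `v'` for `F'`; let `π i` be the smallest
`j ≥ i` such that `v j ∉ sub(v i)` (`n+1` if none), similarly `π'`; let
`L i = l(v i)` with `L (n+1) = 2n+1`, similarly `L'`; and let
`W i i' = sim(sub(v i), sub(v' i'))`. Then for all `i ≤ j`, `i' ≤ j'`, the
maximum weight of a path from `(i,i')` to `(j,j')` equals
`sim(F[L i .. L j), F'[L' i' .. L' j'))`. -/
theorem stmt15 (F : BiForest n) (F' : BiForest n') (η : Fin n → Fin n' → ℤ)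
    (v : ℕ → Fin n) (v' : ℕ → Fin n')
    (π π' : ℕ → ℕ) (L L' : ℕ → ℕ) (W : ℕ → ℕ → ℤ)
    (hv_mono : ∀ i j, 1 ≤ i → i < j → j ≤ n → F.l (v i) < F.l (v j))
    (hv_surj : ∀ u : Fin n, ∃ i, 1 ≤ i ∧ i ≤ n ∧ v i = u)
    (hv'_mono : ∀ i j, 1 ≤ i → i < j → j ≤ n' → F'.l (v' i) < F'.l (v' j))
    (hv'_surj : ∀ u : Fin n', ∃ i, 1 ≤ i ∧ i ≤ n' ∧ v' i = u)
    (hπ : ∀ i, 1 ≤ i → i ≤ n →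
      i < π i ∧ π i ≤ n + 1 ∧
      (∀ j, i ≤ j → j < π i → j ≤ n → F.mem (F.l (v i)) (F.r (v i)) (v j)) ∧
      (π i ≤ n → ¬ F.mem (F.l (v i)) (F.r (v i)) (v (π i))))
    (hπ' : ∀ i, 1 ≤ i → i ≤ n' →
      i < π' i ∧ π' i ≤ n' + 1 ∧
      (∀ j, i ≤ j → j < π' i → j ≤ n' → F'.mem (F'.l (v' i)) (F'.r (v' i)) (v' j)) ∧
      (π' i ≤ n' → ¬ F'.mem (F'.l (v' i)) (F'.r (v' i)) (v' (π' i))))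
    (hL : (∀ i, 1 ≤ i → i ≤ n → L i = F.l (v i)) ∧ L (n + 1) = 2 * n + 1)
    (hL' : (∀ i, 1 ≤ i → i ≤ n' → L' i = F'.l (v' i)) ∧ L' (n' + 1) = 2 * n' + 1)
    (hW : ∀ i i', 1 ≤ i → i ≤ n → 1 ≤ i' → i' ≤ n' →
      IsGreatest (simSet F F' η (F.l (v i)) (F.r (v i)) (F'.l (v' i')) (F'.r (v' i')))
        (W i i')) :
    ∀ i j i' j' (S T : ℤ), 1 ≤ i → i ≤ j → j ≤ n + 1 →
      1 ≤ i' → i' ≤ j' → j' ≤ n' + 1 →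
      IsGreatest {c | PathW (Step n n' π π' W) (i, i') (j, j') c} S →
      IsGreatest (simSet F F' η (L i) (L j) (L' i') (L' j')) T →
      S = T := by
  intro i j i' j' S T hi hij hj hi' hij' hj' hS hT
  have hF : F.IsPreorderIndexing v π L := ⟨hv_mono, hv_surj, hπ, hL.1, hL.2⟩
  have hF' : F'.IsPreorderIndexing v' π' L' := ⟨hv'_mono, hv'_surj, hπ', hL'.1, hL'.2⟩
  apply le_antisymm
  · exact hT.2 <| mem_simSet_of_pathW hF hF'
      (fun i i' hi hin hi' hin' => (hW i i' hi hin hi' hin').1) hS.1 hi hi'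
  · obtain ⟨M, hM, hmem, rfl⟩ := hT.1
    obtain ⟨c, hc, hle⟩ := exists_pathW_ge_wt hF hF'
      (fun i i' hi hin hi' hin' => (hW i i' hi hin hi' hin').2) hM hi hij hj hi' hij' hj' hmem
    exact hle.trans (hS.2 hc)

end Stmt15
end

section
/- Partition of a spine with bounded pieces: given spine nodes s ≺ q in S and a threshold Δ > 0, the greedy partition algorithm (repeatedly take the farthest spine node r_{i+1} with |sub(r_i)∖sub(r_{i+1})| ≤ Δ, or the immediate successor if none exists) produces a sequence s = r_1 ≺ r_2 ≺ ... ≺ r_d = q with d - 1 ≤ 2·|sub(s)∖sub(q)|/Δ + 1, such that for every i < d either |sub(r_i)∖sub(r_{i+1})| ≤ Δ or r_i immediately precedes r_{i+1} in S. -/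
/-!
From `p`, the greedy algorithm jumps to the farthest `q ≤ b` with `w p - w q ≤ Δ`, or to `p + 1`
if there is none. If `c` is the greedy successor of `a` and `c'` that of `c`, then `c'` lies
beyond every admissible jump from `a`, so `w a - w c' > Δ`: every two steps of the greedy
sequence remove more than `Δ` nodes, while only its last step can be left unpaired.
-/

namespace Stmt19

def PartitionStep (w : ℕ → ℕ) (Δ p q : ℕ) : Prop :=
  p < q ∧ (w p - w q ≤ Δ ∨ q = p + 1)

/-- The `Nat.findGreatest` term is at least `p` whenever `p ≤ b` (as `q = p` qualifies), so the
maximum is `p + 1` exactly when no admissible `q` lies beyond `p`. -/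
def greedyNext (w : ℕ → ℕ) (Δ b p : ℕ) : ℕ :=
  max (p + 1) (Nat.findGreatest (fun q => w p - w q ≤ Δ) b)

section greedyNext

variable {w : ℕ → ℕ} {Δ b p q : ℕ}

theorem lt_greedyNext : p < greedyNext w Δ b p :=
  Nat.lt_of_succ_le (le_max_left _ _)

theorem greedyNext_le (hpb : p < b) : greedyNext w Δ b p ≤ b :=
  max_le hpb (Nat.findGreatest_le b)

theorem partitionStep_greedyNext : PartitionStep w Δ p (greedyNext w Δ b p) := by
  refine ⟨lt_greedyNext, ?_⟩
  rcases le_total (p + 1) (Nat.findGreatest (fun q => w p - w q ≤ Δ) b) with h | h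
  · left
    rw [greedyNext, max_eq_right h]
    exact Nat.findGreatest_of_ne_zero (P := fun q => w p - w q ≤ Δ) rfl (by omega)
  · exact Or.inr (max_eq_left h)

theorem lt_sub_of_greedyNext_lt (hq : greedyNext w Δ b p < q) (hqb : q ≤ b) :
    Δ < w p - w q :=
  not_le.mp <| Nat.findGreatest_is_greatest (P := fun q => w p - w q ≤ Δ)
    (lt_of_le_of_lt (le_max_right _ _) hq) hqb

end greedyNext

theorem exists_isChain_partitionStep (w : ℕ → ℕ) (Δ : ℕ) {a b : ℕ} (hab : a ≤ b)
    (hw : ∀ p q, a ≤ p → p ≤ q → q ≤ b → w q ≤ w p) :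
    ∃ l : List ℕ, (a :: l).IsChain (PartitionStep w Δ) ∧
      (a :: l).getLast (List.cons_ne_nil a l) = b ∧ Δ * l.length ≤ 2 * (w a - w b) + Δ := by
  induction h : b - a using Nat.strong_induction_on generalizing a with
  | _ n ih =>
  obtain rfl | hab := hab.eq_or_lt
  · exact ⟨[], .singleton a, rfl, by simp⟩
  set c := greedyNext w Δ b a
  obtain hcb | hcb := (greedyNext_le hab : c ≤ b).eq_or_lt
  · refine ⟨[b], ?_, rfl, by simp⟩
    rw [← hcb]
    exact .cons_cons partitionStep_greedyNext (.singleton c)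
  set c' := greedyNext w Δ b c
  have hac : a < c := lt_greedyNext
  have hcc' : c < c' := lt_greedyNext
  have hc'b : c' ≤ b := greedyNext_le hcb
  have hcover : Δ < w a - w c' := lt_sub_of_greedyNext_lt hcc' hc'b
  obtain ⟨l, hchain, hlast, hbound⟩ :=
    ih (b - c') (by omega) hc'b (fun p q hp => hw p q (by omega)) rfl
  refine ⟨c :: c' :: l,
    .cons_cons partitionStep_greedyNext (.cons_cons partitionStep_greedyNext hchain),
    by simpa using hlast, ?_⟩
  have hwa : w c' ≤ w a := hw a c' le_rfl (by omega) hc'b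
  have hwb : w b ≤ w c' := hw c' b (by omega) hc'b le_rfl
  simp only [List.length_cons, mul_add]
  omega

theorem _root_.List.getD_lt_getD_of_isChain_lt {α : Type*} [Preorder α] {l : List α}
    (hl : l.IsChain (· < ·)) {i j : ℕ} (hij : i < j) (hj : j < l.length) (x : α) :
    l.getD i x < l.getD j x := by
  rw [List.getD_eq_getElem _ _ (hij.trans hj), List.getD_eq_getElem _ _ hj]
  exact List.pairwise_iff_getElem.mp hl.pairwise i j (hij.trans hj) hj hij

/-- Spine nodes are the positions `a, …, b`, consecutive positions being immediate successors,
and `w p = |sub(s_p)|`, so that `|sub(s_p) ∖ sub(s_q)| = w p - w q` for `p ≤ q`; the length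
bound is multiplied through by `Δ`. -/
theorem stmt19_general (w : ℕ → ℕ) (a b Δ : ℕ) (hab : a < b)
    (hw : ∀ p q, a ≤ p → p ≤ q → q ≤ b → w q ≤ w p) :
    ∃ (d : ℕ) (r : ℕ → ℕ), 1 ≤ d ∧ r 0 = a ∧ r (d - 1) = b ∧
      (∀ i j, i < j → j ≤ d - 1 → r i < r j) ∧
      (∀ i, i ≤ d - 1 → a ≤ r i ∧ r i ≤ b) ∧
      (∀ i, i + 1 ≤ d - 1 → w (r i) - w (r (i + 1)) ≤ Δ ∨ r (i + 1) = r i + 1) ∧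
      Δ * (d - 1) ≤ 2 * (w a - w b) + Δ := by
  obtain ⟨l, hchain, hlast, hbound⟩ := exists_isChain_partitionStep w Δ hab.le hw
  set r : ℕ → ℕ := fun i => (a :: l).getD i b
  have hmono : ∀ i j, i < j → j ≤ l.length → r i < r j := fun i j hij hj =>
    List.getD_lt_getD_of_isChain_lt (hchain.imp fun _ _ h => h.1) hij
      (by simpa [Nat.lt_succ_iff]) b
  have hle : ∀ i j, i ≤ j → j ≤ l.length → r i ≤ r j := fun i j hij hj =>
    hij.eq_or_lt.elim (fun h => h ▸ le_rfl) fun h => (hmono i j h hj).le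
  have hr_last : r l.length = b := by simp [r, ← hlast, List.getLast_eq_getElem]
  refine ⟨l.length + 1, r, ?_⟩
  simp only [Nat.add_sub_cancel]
  refine ⟨by omega, rfl, hr_last, hmono,
    fun i hi => ⟨hle 0 i i.zero_le hi, hr_last ▸ hle i _ hi le_rfl⟩, fun i hi => ?_, hbound⟩
  have hi' : i + 1 < (a :: l).length := by simpa using hi
  rw [show r i = (a :: l)[i] from List.getD_eq_getElem _ _ (by omega),
    show r (i + 1) = (a :: l)[i + 1] from List.getD_eq_getElem _ _ hi']
  exact (List.isChain_iff_getElem.mp hchain i hi').2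

/-- greedy partition of a spine with bounded pieces: model the
spine by positions `a, …, b` (consecutive positions are spine nodes one of
which immediately precedes the other) together with the antitone size function
`w p = |sub(s_p)|`, so that `|sub(s_p) ∖ sub(s_q)| = w p - w q` for `p ≤ q`.
Given a threshold `Δ > 0`, there is a sequence of positions
`a = r 0 < r 1 < ⋯ < r (d-1) = b` such that for every `i < d - 1` either
`|sub(r i) ∖ sub(r (i+1))| ≤ Δ` or `r (i+1)` is the immediate successor of
`r i`, and whose length satisfies `d - 1 ≤ 2·|sub(s) ∖ sub(q)|/Δ + 1`,
stated multiplicatively as `Δ·(d - 1) ≤ 2·(w a - w b) + Δ`. -/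
theorem stmt19 (w : ℕ → ℕ) (a b Δ : ℕ) (hab : a < b) (hΔ : 0 < Δ)
    (hw : ∀ p q, a ≤ p → p ≤ q → q ≤ b → w q ≤ w p) :
    ∃ (d : ℕ) (r : ℕ → ℕ), 1 ≤ d ∧ r 0 = a ∧ r (d - 1) = b ∧
      (∀ i j, i < j → j ≤ d - 1 → r i < r j) ∧
      (∀ i, i ≤ d - 1 → a ≤ r i ∧ r i ≤ b) ∧
      (∀ i, i + 1 ≤ d - 1 → w (r i) - w (r (i + 1)) ≤ Δ ∨ r (i + 1) = r i + 1) ∧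
      Δ * (d - 1) ≤ 2 * (w a - w b) + Δ :=
  stmt19_general w a b Δ hab hw

end Stmt19
end
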